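/- arXiv:1307.8291 — 5 statements merged into one kernel-verified Lean document; each statement's English description precedes it below -/
import Mathlib

section
/- Let f : I ⊂ [0,∞) → ℝ be differentiable on I°, m ∈ (0,1], ma, b ∈ I° with a < b, and suppose f' is integrable on [ma, mb]. If |f'|^q is (α,m)-convex on [ma,b] for some fixed q ≥ 1 and (α,m) ∈ [0,1]² (with m > 0), then for every x ∈ [a,b], λ ∈ [0,1] and θ > 0: |S_f(mx,λ,θ,ma,mb)| ≤ (m^θ A₁(θ,λ)^{1−1/q}/(b−a)) { (x−a)^{θ+1} (|f'(mx)|^q A₂(α,θ,λ) + m |f'(a)|^q A₃(α,θ,λ))^{1/q} + (b−x)^{θ+1} (|f'(mx)|^q A₂(α,θ,λ) + m |f'(b)|^q A₃(α,θ,λ))^{1/q} }. -/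
/-!
Substituting `t = e + s (p - e)` and integrating by parts along the segments from `m a` and from
`m b` to `m x` writes `S_f` as `m^θ / (b - a) * ((x - a)^(θ+1) K_a - (b - x)^(θ+1) K_b)` with
`K_v = ∫₀¹ (s^θ - λ) f'(m v + s (m x - m v)) ds`. Each `K_v` is bounded by the power-mean inequality
with weight `|s^θ - λ|`, and then `(α,m)`-convexity of `|f'|^q` along the segment bounds `|f'|^q`
by `s^α |f'(m x)|^q + m (1 - s^α) |f'(v)|^q`. The weight integrals that remain are `A₁`, `A₂` and
`A₁ - A₂`; they are computed by splitting `[0, 1]` where `s^θ - λ` changes sign, at `s = λ^(1/θ)`.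
-/

open MeasureTheory Set intervalIntegral Real

/-- Riemann-Liouville fractional integral `J_{d^-}^θ f(c) = (1/Γ(θ)) ∫_c^d (t-c)^(θ-1) f(t) dt`. -/
noncomputable def rlLeft (θ c d : ℝ) (f : ℝ → ℝ) : ℝ :=
  (1 / Real.Gamma θ) * ∫ t in c..d, (t - c) ^ (θ - 1) * f t

/-- Riemann-Liouville fractional integral `J_{c^+}^θ f(d) = (1/Γ(θ)) ∫_c^d (d-t)^(θ-1) f(t) dt`. -/
noncomputable def rlRight (θ c d : ℝ) (f : ℝ → ℝ) : ℝ :=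
  (1 / Real.Gamma θ) * ∫ t in c..d, (d - t) ^ (θ - 1) * f t

/-- The quantity `S_f(mx, λ, θ, ma, mb)` from the paper. -/
noncomputable def Sf (f : ℝ → ℝ) (m a b x lam θ : ℝ) : ℝ :=
  (1 - lam) * m ^ (θ - 1) * (((x - a) ^ θ + (b - x) ^ θ) / (b - a)) * f (m * x)
  + lam * m ^ (θ - 1) * (((x - a) ^ θ * f (m * a) + (b - x) ^ θ * f (m * b)) / (b - a))
  - Real.Gamma (θ + 1) / (m * (b - a)) *
      (rlLeft θ (m * a) (m * x) f + rlRight θ (m * x) (m * b) f)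

/-- `(α,m)`-convexity of `g` on the interval `[c,d]`. -/
def AlphaMConvexOn (α m c d : ℝ) (g : ℝ → ℝ) : Prop :=
  ∀ u ∈ Set.Icc c d, ∀ v ∈ Set.Icc c d, ∀ t ∈ Set.Icc (0:ℝ) 1,
    t * u + m * (1 - t) * v ∈ Set.Icc c d →
      g (t * u + m * (1 - t) * v) ≤ t ^ α * g u + m * (1 - t ^ α) * g v

noncomputable def A1 (θ lam : ℝ) : ℝ := (2 * θ * lam ^ (1 + 1 / θ) + 1) / (θ + 1) - lam

noncomputable def A2 (α θ lam : ℝ) : ℝ :=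
  2 * θ * lam ^ (1 + (1 + α) / θ) / ((α + 1) * (α + θ + 1)) + 1 / (α + θ + 1) - lam / (α + 1)

noncomputable def A3 (α θ lam : ℝ) : ℝ := A1 θ lam - A2 α θ lam

theorem integral_rpow_mul_rpow_le {ι : Type*} [MeasurableSpace ι] {μ : Measure ι}
    {f g : ι → ℝ} {p q : ℝ} (hp : 0 ≤ p) (hq : 0 ≤ q) (hpq : p + q = 1)
    (hf : 0 ≤ᵐ[μ] f) (hg : 0 ≤ᵐ[μ] g) (hfi : Integrable f μ) (hgi : Integrable g μ) :
    ∫ a, f a ^ p * g a ^ q ∂μ ≤ (∫ a, f a ∂μ) ^ p * (∫ a, g a ∂μ) ^ q := by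
  have hfg : 0 ≤ᵐ[μ] fun a => f a ^ p * g a ^ q := by
    filter_upwards [hf, hg] with a ha hb using mul_nonneg (rpow_nonneg ha _) (rpow_nonneg hb _)
  have hmeas : AEStronglyMeasurable (fun a => f a ^ p * g a ^ q) μ :=
    ((continuous_rpow_const hp).comp_aestronglyMeasurable hfi.1).mul
      ((continuous_rpow_const hq).comp_aestronglyMeasurable hgi.1)
  rw [integral_eq_lintegral_of_nonneg_ae hfg hmeas, integral_eq_lintegral_of_nonneg_ae hf hfi.1,
    integral_eq_lintegral_of_nonneg_ae hg hgi.1, ENNReal.toReal_rpow, ENNReal.toReal_rpow,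
    ← ENNReal.toReal_mul]
  refine ENNReal.toReal_mono (ENNReal.mul_ne_top (ENNReal.rpow_ne_top_of_nonneg hp
    hfi.lintegral_lt_top.ne) (ENNReal.rpow_ne_top_of_nonneg hq hgi.lintegral_lt_top.ne)) ?_
  calc ∫⁻ a, ENNReal.ofReal (f a ^ p * g a ^ q) ∂μ
      = ∫⁻ a, ENNReal.ofReal (f a) ^ p * ENNReal.ofReal (g a) ^ q ∂μ := by
        refine lintegral_congr_ae ?_
        filter_upwards [hf, hg] with a ha hb
        rw [ENNReal.ofReal_mul (rpow_nonneg ha _), ENNReal.ofReal_rpow_of_nonneg ha hp,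
          ENNReal.ofReal_rpow_of_nonneg hb hq]
    _ ≤ _ := ENNReal.lintegral_mul_norm_pow_le hfi.1.aemeasurable.ennreal_ofReal
        hgi.1.aemeasurable.ennreal_ofReal hp hq hpq

theorem integral_mul_abs_le_of_abs_rpow_le {ι : Type*} [MeasurableSpace ι] {μ : Measure ι}
    {w F D : ι → ℝ} {q : ℝ} (hq : 1 ≤ q) (hw : 0 ≤ᵐ[μ] w) (hwi : Integrable w μ)
    (hF : AEStronglyMeasurable F μ) (hwD : Integrable (fun a => w a * D a) μ)
    (hFD : ∀ᵐ a ∂μ, |F a| ^ q ≤ D a) :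
    ∫ a, w a * |F a| ∂μ ≤ (∫ a, w a ∂μ) ^ (1 - 1 / q) * (∫ a, w a * D a ∂μ) ^ (1 / q) := by
  have hq0 : q ≠ 0 := by positivity
  have hwF_le : (fun a => w a * |F a| ^ q) ≤ᵐ[μ] fun a => w a * D a := by
    filter_upwards [hw, hFD] with a ha hFa using mul_le_mul_of_nonneg_left hFa ha
  have hwF_nonneg : 0 ≤ᵐ[μ] fun a => w a * |F a| ^ q := by
    filter_upwards [hw] with a ha using mul_nonneg ha (rpow_nonneg (abs_nonneg _) _)
  have hwF : Integrable (fun a => w a * |F a| ^ q) μ := by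
    refine hwD.mono' (hwi.1.mul (((continuous_rpow_const (by positivity)).comp
      continuous_abs).comp_aestronglyMeasurable hF)) ?_
    filter_upwards [hwF_le, hwF_nonneg] with a hle hnn
    rwa [Real.norm_of_nonneg hnn]
  calc ∫ a, w a * |F a| ∂μ = ∫ a, w a ^ (1 - 1 / q) * (w a * |F a| ^ q) ^ (1 / q) ∂μ := by
        refine integral_congr_ae ?_
        filter_upwards [hw] with a ha
        rw [mul_rpow ha (by positivity), ← mul_assoc, ← rpow_add' ha (by simp), sub_add_cancel,
          rpow_one, one_div, rpow_rpow_inv (abs_nonneg _) hq0]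
    _ ≤ (∫ a, w a ∂μ) ^ (1 - 1 / q) * (∫ a, w a * |F a| ^ q ∂μ) ^ (1 / q) :=
        integral_rpow_mul_rpow_le (by simp [inv_le_one_of_one_le₀ hq]) (by positivity)
          (by ring) hw hwF_nonneg hwi hwF
    _ ≤ _ := by
        gcongr (∫ a, w a ∂μ) ^ (1 - 1 / q) * ?_
        · exact rpow_nonneg (integral_nonneg_of_ae hw) _
        · exact rpow_le_rpow (integral_nonneg_of_ae hwF_nonneg) (integral_mono_ae hwF hwD hwF_le)
            (by positivity)

theorem A2_zero (θ lam : ℝ) : A2 0 θ lam = A1 θ lam := by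
  simp only [A2, A1]
  ring_nf

theorem integral_rpow_sub_mul_rpow {θ lam α u v : ℝ} (hθ : 0 < θ) (hα : 0 ≤ α) (hu : 0 ≤ u)
    (huv : u ≤ v) :
    ∫ s in u..v, (s ^ θ - lam) * s ^ α =
      (v ^ (θ + α + 1) / (θ + α + 1) - lam * v ^ (α + 1) / (α + 1)) -
        (u ^ (θ + α + 1) / (θ + α + 1) - lam * u ^ (α + 1) / (α + 1)) := by
  have hθα : 0 < θ + α := by positivity
  rw [integral_congr (g := fun s => s ^ (θ + α) - lam * s ^ α), intervalIntegral.integral_sub,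
    intervalIntegral.integral_const_mul, integral_rpow (by left; linarith),
    integral_rpow (by left; linarith)]
  · ring
  · exact (continuous_rpow_const hθα.le).intervalIntegrable _ _
  · exact ((continuous_rpow_const hα).intervalIntegrable _ _).const_mul _
  · intro s hs
    rw [uIcc_of_le huv] at hs
    simp only [rpow_add' (hu.trans hs.1) (by positivity : θ + α ≠ 0)]
    ring

theorem integral_abs_rpow_sub_mul_rpow {θ lam α : ℝ} (hθ : 0 < θ) (hlam : lam ∈ Icc (0:ℝ) 1)
    (hα : 0 ≤ α) : ∫ s in (0:ℝ)..1, |s ^ θ - lam| * s ^ α = A2 α θ lam := by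
  obtain ⟨hlam0, hlam1⟩ := hlam
  set r := lam ^ (1 / θ) with hr_def
  have hr0 : 0 ≤ r := rpow_nonneg hlam0 _
  have hr1 : r ≤ 1 := rpow_le_one hlam0 hlam1 (by positivity)
  have hrθ : r ^ θ = lam := by rw [← rpow_mul hlam0, one_div_mul_cancel hθ.ne', rpow_one]
  have hcont : Continuous fun s : ℝ => |s ^ θ - lam| * s ^ α :=
    ((continuous_rpow_const hθ.le).sub continuous_const).abs.mul (continuous_rpow_const hα)
  have h₁ : ∫ s in (0:ℝ)..r, |s ^ θ - lam| * s ^ α = -∫ s in (0:ℝ)..r, (s ^ θ - lam) * s ^ α := by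
    rw [← intervalIntegral.integral_neg]
    refine integral_congr fun s hs => ?_
    rw [uIcc_of_le hr0] at hs
    rw [abs_of_nonpos (by rw [sub_nonpos, ← hrθ]; exact rpow_le_rpow hs.1 hs.2 hθ.le)]
    ring
  have h₂ : ∫ s in r..1, |s ^ θ - lam| * s ^ α = ∫ s in r..1, (s ^ θ - lam) * s ^ α := by
    refine integral_congr fun s hs => ?_
    rw [uIcc_of_le hr1] at hs
    rw [abs_of_nonneg (by rw [sub_nonneg, ← hrθ]; exact rpow_le_rpow hr0 hs.1 hθ.le)]
  have hrpow : r ^ (θ + α + 1) = lam ^ (1 + (1 + α) / θ) := by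
    rw [hr_def, ← rpow_mul hlam0]
    congr 1
    field_simp
    ring
  have hlam_r : lam * r ^ (α + 1) = lam ^ (1 + (1 + α) / θ) := by
    rw [← hrpow, ← hrθ, ← rpow_add' hr0 (by positivity)]
    ring_nf
  rw [← integral_add_adjacent_intervals (hcont.intervalIntegrable 0 r)
    (hcont.intervalIntegrable r 1), h₁, h₂, integral_rpow_sub_mul_rpow hθ hα le_rfl hr0,
    integral_rpow_sub_mul_rpow hθ hα hr0 hr1, zero_rpow (by positivity), zero_rpow (by positivity),
    one_rpow, one_rpow, hlam_r, hrpow, A2]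
  field_simp
  ring

theorem integral_abs_rpow_sub {θ lam : ℝ} (hθ : 0 < θ) (hlam : lam ∈ Icc (0:ℝ) 1) :
    ∫ s in (0:ℝ)..1, |s ^ θ - lam| = A1 θ lam := by
  simpa [A2_zero] using integral_abs_rpow_sub_mul_rpow hθ hlam le_rfl

theorem integral_abs_rpow_sub_mul_convexityBound {θ lam α m P Q : ℝ} (hθ : 0 < θ)
    (hlam : lam ∈ Icc (0:ℝ) 1) (hα : 0 ≤ α) :
    ∫ s in (0:ℝ)..1, |s ^ θ - lam| * (s ^ α * P + m * (1 - s ^ α) * Q) =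
      P * A2 α θ lam + m * Q * A3 α θ lam := by
  have hw : Continuous fun s : ℝ => |s ^ θ - lam| :=
    ((continuous_rpow_const hθ.le).sub continuous_const).abs
  have hwα : Continuous fun s : ℝ => |s ^ θ - lam| * s ^ α := hw.mul (continuous_rpow_const hα)
  calc ∫ s in (0:ℝ)..1, |s ^ θ - lam| * (s ^ α * P + m * (1 - s ^ α) * Q)
      = ∫ s in (0:ℝ)..1, ((P - m * Q) * (|s ^ θ - lam| * s ^ α) + m * Q * |s ^ θ - lam|) := by
        congr 1; ext s; ring
    _ = P * A2 α θ lam + m * Q * A3 α θ lam := by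
        rw [intervalIntegral.integral_add ((hwα.intervalIntegrable 0 1).const_mul _)
          ((hw.intervalIntegrable 0 1).const_mul _), intervalIntegral.integral_const_mul,
          intervalIntegral.integral_const_mul,
          integral_abs_rpow_sub_mul_rpow hθ hlam hα, integral_abs_rpow_sub hθ hlam, A3]
        ring

theorem IntervalIntegrable.comp_segment {g : ℝ → ℝ} {e p : ℝ}
    (hg : IntervalIntegrable g volume e p) :
    IntervalIntegrable (fun s => g (e + s * (p - e))) volume 0 1 := by
  rcases eq_or_ne (p - e) 0 with h | h
  · simp [h]
  have := (hg.comp_add_right e).comp_mul_left (c := p - e)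
  simp only [sub_self, zero_div, div_self h] at this
  convert this using 2 with s
  ring_nf

theorem integral_rpow_sub_mul_deriv {G G' : ℝ → ℝ} {θ lam : ℝ} (hθ : 0 < θ)
    (hG : ∀ s ∈ Icc (0:ℝ) 1, HasDerivAt G (G' s) s) (hG' : IntervalIntegrable G' volume 0 1) :
    ∫ s in (0:ℝ)..1, (s ^ θ - lam) * G' s =
      (1 - lam) * G 1 + lam * G 0 - θ * ∫ s in (0:ℝ)..1, s ^ (θ - 1) * G s := by
  have hIcc : uIcc (0:ℝ) 1 = Icc 0 1 := uIcc_of_le zero_le_one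
  have hibp := integral_mul_deriv_eq_deriv_mul_of_hasDerivAt
    (u := fun s => s ^ θ - lam) (u' := fun s => θ * s ^ (θ - 1)) (v := G) (v' := G')
    ((continuous_rpow_const hθ.le).sub continuous_const).continuousOn
    (fun s hs => (hG s (hIcc ▸ hs)).continuousAt.continuousWithinAt)
    (fun s hs => by
      simpa using (hasDerivAt_rpow_const (Or.inl (by simp at hs; exact hs.1.ne'))).sub_const lam)
    (fun s hs => hG s (Ioo_subset_Icc_self (by simpa using hs)))
    ((intervalIntegrable_rpow' (by linarith)).const_mul θ) hG'
  simp only [one_rpow, zero_rpow hθ.ne', mul_assoc] at hibp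
  rw [hibp, intervalIntegral.integral_const_mul]
  ring

noncomputable def segmentKernelIntegral (θ lam : ℝ) (g : ℝ → ℝ) (e p : ℝ) : ℝ :=
  ∫ s in (0:ℝ)..1, (s ^ θ - lam) * g (e + s * (p - e))

theorem sub_mul_segmentKernelIntegral {f f' : ℝ → ℝ} {θ lam e p : ℝ} (hθ : 0 < θ)
    (hf : ∀ t ∈ uIcc e p, HasDerivAt f (f' t) t) (hf' : IntervalIntegrable f' volume e p) :
    (p - e) * segmentKernelIntegral θ lam f' e p =
      (1 - lam) * f p + lam * f e - θ * ∫ s in (0:ℝ)..1, s ^ (θ - 1) * f (e + s * (p - e)) := by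
  have hmem : ∀ s ∈ Icc (0:ℝ) 1, e + s * (p - e) ∈ uIcc e p := fun s hs => by
    simpa using (convex_uIcc e p).add_smul_sub_mem left_mem_uIcc right_mem_uIcc hs
  have hG : ∀ s ∈ Icc (0:ℝ) 1,
      HasDerivAt (fun s => f (e + s * (p - e))) ((p - e) * f' (e + s * (p - e))) s := by
    intro s hs
    have h := (hf _ (hmem s hs)).comp s (((hasDerivAt_id' s).mul_const (p - e)).const_add e)
    rwa [one_mul, mul_comm] at h
  calc (p - e) * segmentKernelIntegral θ lam f' e p
      = ∫ s in (0:ℝ)..1, (s ^ θ - lam) * ((p - e) * f' (e + s * (p - e))) := by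
        rw [segmentKernelIntegral, ← intervalIntegral.integral_const_mul]; congr 1; ext s; ring
    _ = _ := by
        rw [integral_rpow_sub_mul_deriv hθ hG (hf'.comp_segment.const_mul _)]
        simp

theorem mul_rpow_sub_one {x θ : ℝ} (hx : 0 ≤ x) (hθ : θ ≠ 0) : x * x ^ (θ - 1) = x ^ θ := by
  rw [mul_comm, ← rpow_add_one' hx (by simpa using hθ), sub_add_cancel]

theorem rlLeft_eq_integral_segment {f : ℝ → ℝ} {θ e p : ℝ} (hθ : 0 < θ) (hep : e ≤ p) :
    rlLeft θ e p f =
      (p - e) ^ θ / Gamma θ * ∫ s in (0:ℝ)..1, s ^ (θ - 1) * f (e + s * (p - e)) := by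
  have hsub := smul_integral_comp_add_mul (a := 0) (b := 1)
    (fun t => (t - e) ^ (θ - 1) * f t) (p - e) e
  simp only [mul_zero, add_zero, mul_one, add_sub_cancel, smul_eq_mul] at hsub
  have hpull : ∫ s in (0:ℝ)..1, (e + (p - e) * s - e) ^ (θ - 1) * f (e + (p - e) * s) =
      (p - e) ^ (θ - 1) * ∫ s in (0:ℝ)..1, s ^ (θ - 1) * f (e + s * (p - e)) := by
    rw [← intervalIntegral.integral_const_mul]
    refine integral_congr fun s hs => ?_
    rw [uIcc_of_le zero_le_one] at hs
    simp only [add_sub_cancel_left, mul_rpow (sub_nonneg.2 hep) hs.1, mul_comm s]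
    ring
  rw [rlLeft, ← hsub, hpull, ← mul_rpow_sub_one (sub_nonneg.2 hep) hθ.ne']
  ring

theorem rlRight_eq_integral_segment {f : ℝ → ℝ} {θ e p : ℝ} (hθ : 0 < θ) (hpe : p ≤ e) :
    rlRight θ p e f =
      (e - p) ^ θ / Gamma θ * ∫ s in (0:ℝ)..1, s ^ (θ - 1) * f (e + s * (p - e)) := by
  have hsub := smul_integral_comp_add_mul (a := 0) (b := 1)
    (fun t => (e - t) ^ (θ - 1) * f t) (p - e) e
  simp only [mul_zero, add_zero, mul_one, add_sub_cancel, smul_eq_mul] at hsub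
  have hpull : ∫ s in (0:ℝ)..1, (e - (e + (p - e) * s)) ^ (θ - 1) * f (e + (p - e) * s) =
      (e - p) ^ (θ - 1) * ∫ s in (0:ℝ)..1, s ^ (θ - 1) * f (e + s * (p - e)) := by
    rw [← intervalIntegral.integral_const_mul]
    refine integral_congr fun s hs => ?_
    rw [uIcc_of_le zero_le_one] at hs
    simp only [show e - (e + (p - e) * s) = (e - p) * s by ring, mul_rpow (sub_nonneg.2 hpe) hs.1,
      mul_comm s]
    ring
  rw [rlRight, integral_symm, ← hsub, hpull, ← mul_rpow_sub_one (sub_nonneg.2 hpe) hθ.ne']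
  ring

theorem Sf_eq_segmentKernelIntegral {f f' : ℝ → ℝ} {m a b x lam θ : ℝ} (hm : 0 < m) (hab : a < b)
    (hθ : 0 < θ) (hx : x ∈ Icc a b) (hf : ∀ t ∈ Icc (m * a) (m * b), HasDerivAt f (f' t) t)
    (hf' : IntervalIntegrable f' volume (m * a) (m * b)) :
    Sf f m a b x lam θ = m ^ θ / (b - a) *
      ((x - a) ^ (θ + 1) * segmentKernelIntegral θ lam f' (m * a) (m * x) -
        (b - x) ^ (θ + 1) * segmentKernelIntegral θ lam f' (m * b) (m * x)) := by
  obtain ⟨hax, hxb⟩ := hx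
  have hxa : 0 ≤ x - a := sub_nonneg.2 hax
  have hbx : 0 ≤ b - x := sub_nonneg.2 hxb
  have hmax : m * a ≤ m * x := by gcongr
  have hmxb : m * x ≤ m * b := by gcongr
  have hsub_left : uIcc (m * a) (m * x) ⊆ uIcc (m * a) (m * b) :=
    uIcc_subset_uIcc left_mem_uIcc (by rw [uIcc_of_le (hmax.trans hmxb)]; exact ⟨hmax, hmxb⟩)
  have hsub_right : uIcc (m * b) (m * x) ⊆ uIcc (m * a) (m * b) :=
    uIcc_subset_uIcc right_mem_uIcc (by rw [uIcc_of_le (hmax.trans hmxb)]; exact ⟨hmax, hmxb⟩)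
  have hIcc : uIcc (m * a) (m * b) = Icc (m * a) (m * b) := uIcc_of_le (hmax.trans hmxb)
  have hL := sub_mul_segmentKernelIntegral (lam := lam) hθ
    (fun t ht => hf t (hIcc ▸ hsub_left ht)) (hf'.mono_set hsub_left)
  have hR := sub_mul_segmentKernelIntegral (lam := lam) hθ
    (fun t ht => hf t (hIcc ▸ hsub_right ht)) (hf'.mono_set hsub_right)
  have hpow_left : (m * x - m * a) ^ θ = m ^ θ * (x - a) ^ θ := by
    rw [← mul_sub, mul_rpow hm.le hxa]
  have hpow_right : (m * b - m * x) ^ θ = m ^ θ * (b - x) ^ θ := by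
    rw [← mul_sub, mul_rpow hm.le hbx]
  rw [Sf, rlLeft_eq_integral_segment hθ hmax, rlRight_eq_integral_segment hθ hmxb,
    Gamma_add_one hθ.ne', hpow_left, hpow_right, rpow_sub_one hm.ne',
    rpow_add_one' hxa (by positivity), rpow_add_one' hbx (by positivity)]
  have hΓ : Gamma θ ≠ 0 := (Gamma_pos_of_pos hθ).ne'
  have hba : b - a ≠ 0 := (sub_pos.2 hab).ne'
  -- named so that `field_simp` treats the integrals as atoms
  set Ja := ∫ s in (0:ℝ)..1, s ^ (θ - 1) * f (m * a + s * (m * x - m * a))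
  set Jb := ∫ s in (0:ℝ)..1, s ^ (θ - 1) * f (m * b + s * (m * x - m * b))
  field_simp
  linear_combination -(x - a) ^ θ * hL - (b - x) ^ θ * hR

theorem abs_integral_rpow_sub_mul_le {F D : ℝ → ℝ} {θ lam q : ℝ} (hθ : 0 < θ)
    (hlam : lam ∈ Icc (0:ℝ) 1) (hq : 1 ≤ q) (hF : IntervalIntegrable F volume 0 1)
    (hD : ContinuousOn D (Icc 0 1)) (hFD : ∀ s ∈ Icc (0:ℝ) 1, |F s| ^ q ≤ D s) :
    |∫ s in (0:ℝ)..1, (s ^ θ - lam) * F s| ≤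
      A1 θ lam ^ (1 - 1 / q) * (∫ s in (0:ℝ)..1, |s ^ θ - lam| * D s) ^ (1 / q) := by
  have hw : Continuous fun s : ℝ => |s ^ θ - lam| :=
    ((continuous_rpow_const hθ.le).sub continuous_const).abs
  calc |∫ s in (0:ℝ)..1, (s ^ θ - lam) * F s|
      ≤ ∫ s in (0:ℝ)..1, |s ^ θ - lam| * |F s| := by
        simpa only [abs_mul] using abs_integral_le_integral_abs (f := fun s => (s ^ θ - lam) * F s)
          (μ := volume) zero_le_one
    _ ≤ _ := by
        simp only [integral_of_le zero_le_one, ← integral_abs_rpow_sub hθ hlam]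
        exact integral_mul_abs_le_of_abs_rpow_le hq (ae_of_all _ fun _ => abs_nonneg _)
          (hw.integrableOn_Icc.mono_set Ioc_subset_Icc_self) hF.1.aestronglyMeasurable
          ((hw.continuousOn.mul hD).integrableOn_Icc.mono_set Ioc_subset_Icc_self)
          (ae_restrict_of_forall_mem measurableSet_Ioc fun s hs => hFD s (Ioc_subset_Icc_self hs))

theorem AlphaMConvexOn.le_segment {α m c d u v s : ℝ} {g : ℝ → ℝ} (h : AlphaMConvexOn α m c d g)
    (hu : u ∈ Icc c d) (hv : v ∈ Icc c d) (hmv : m * v ∈ Icc c d) (hs : s ∈ Icc (0:ℝ) 1) :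
    g (m * v + s * (u - m * v)) ≤ s ^ α * g u + m * (1 - s ^ α) * g v := by
  have hmem : m * v + s * (u - m * v) ∈ Icc c d := by
    simpa using (convex_Icc c d).add_smul_sub_mem hmv hu hs
  rw [show m * v + s * (u - m * v) = s * u + m * (1 - s) * v by ring] at hmem ⊢
  exact h u hu v hv s hs hmem

theorem abs_segmentKernelIntegral_le {f' : ℝ → ℝ} {α m c d q θ lam u v : ℝ} (hθ : 0 < θ)
    (hlam : lam ∈ Icc (0:ℝ) 1) (hα : 0 ≤ α) (hq : 1 ≤ q)
    (hconv : AlphaMConvexOn α m c d fun y => |f' y| ^ q) (hu : u ∈ Icc c d) (hv : v ∈ Icc c d)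
    (hmv : m * v ∈ Icc c d) (hf' : IntervalIntegrable f' volume (m * v) u) :
    |segmentKernelIntegral θ lam f' (m * v) u| ≤
      A1 θ lam ^ (1 - 1 / q) *
        (|f' u| ^ q * A2 α θ lam + m * |f' v| ^ q * A3 α θ lam) ^ (1 / q) := by
  rw [← integral_abs_rpow_sub_mul_convexityBound hθ hlam hα]
  refine abs_integral_rpow_sub_mul_le hθ hlam hq hf'.comp_segment ?_
    fun s hs => hconv.le_segment hu hv hmv hs
  have hpow := continuous_rpow_const hα
  fun_prop

theorem powmean_ineq
    (I : Set ℝ) (hI : Set.OrdConnected I) (hI0 : I ⊆ Set.Ici (0:ℝ)) (f f' : ℝ → ℝ) (m a b : ℝ)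
    (hm : m ∈ Set.Ioc (0:ℝ) 1) (hab : a < b)
    (hma : m * a ∈ interior I) (hb : b ∈ interior I)
    (hf : ∀ y ∈ interior I, HasDerivAt f (f' y) y)
    (hint : IntervalIntegrable f' MeasureTheory.volume (m * a) (m * b))
    (α q : ℝ) (hα : α ∈ Set.Icc (0:ℝ) 1) (hq : 1 ≤ q)
    (hconv : AlphaMConvexOn α m (m * a) b (fun u => |f' u| ^ q)) :
    ∀ x ∈ Set.Icc a b, ∀ lam ∈ Set.Icc (0:ℝ) 1, ∀ θ : ℝ, 0 < θ →
      |Sf f m a b x lam θ| ≤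
        m ^ θ * (A1 θ lam) ^ (1 - 1 / q) / (b - a) *
          ((x - a) ^ (θ + 1) *
              (|f' (m * x)| ^ q * A2 α θ lam + m * |f' a| ^ q * A3 α θ lam) ^ (1 / q) +
            (b - x) ^ (θ + 1) *
              (|f' (m * x)| ^ q * A2 α θ lam + m * |f' b| ^ q * A3 α θ lam) ^ (1 / q)) := by
  intro x hx lam hlam θ hθ
  obtain ⟨hm0, hm1⟩ := hm
  have ha0 : 0 ≤ a := nonneg_of_mul_nonneg_right (hI0 (interior_subset hma)) hm0
  have hb0 : 0 ≤ b := hI0 (interior_subset hb)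
  have hmx : m * x ∈ Icc (m * a) (m * b) := ⟨by nlinarith [hx.1], by nlinarith [hx.2]⟩
  have hmb : m * b ∈ Icc (m * a) b := ⟨by nlinarith, by nlinarith⟩
  have hmx' : m * x ∈ Icc (m * a) b := ⟨hmx.1, hmx.2.trans hmb.2⟩
  have hf' : ∀ t ∈ Icc (m * a) (m * b), HasDerivAt f (f' t) t := fun t ht =>
    hf t (hI.interior.out hma hb ⟨ht.1, ht.2.trans hmb.2⟩)
  have hKa := abs_segmentKernelIntegral_le hθ hlam hα.1 hq hconv hmx' ⟨by nlinarith, hab.le⟩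
    ⟨le_rfl, hmx'.1.trans hmx'.2⟩
    (hint.mono_set (uIcc_subset_uIcc left_mem_uIcc (Icc_subset_uIcc hmx)))
  have hKb := abs_segmentKernelIntegral_le hθ hlam hα.1 hq hconv hmx' ⟨hmb.1.trans hmb.2, le_rfl⟩
    hmb (hint.mono_set (uIcc_subset_uIcc right_mem_uIcc (Icc_subset_uIcc hmx)))
  have hxa : 0 ≤ (x - a) ^ (θ + 1) := rpow_nonneg (sub_nonneg.2 hx.1) _
  have hbx : 0 ≤ (b - x) ^ (θ + 1) := rpow_nonneg (sub_nonneg.2 hx.2) _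
  have hc : 0 ≤ m ^ θ / (b - a) := div_nonneg (rpow_nonneg hm0.le _) (sub_pos.2 hab).le
  rw [Sf_eq_segmentKernelIntegral hm0 hab hθ hx hf' hint, abs_mul, abs_of_nonneg hc]
  grw [abs_sub, abs_mul, abs_mul, abs_of_nonneg hxa, abs_of_nonneg hbx, hKa, hKb]
  exact le_of_eq (by ring)
end

section
/- Let f : I ⊂ [0,∞) → ℝ be differentiable on I°, m ∈ (0,1], ma, b ∈ I° with a < b, and suppose f' is integrable on [ma, mb]. If |f'|^q is (α,m)-convex on [ma,b] for some fixed q ≥ 1 and (α,m) ∈ [0,1]², then for every x ∈ [a,b] and λ ∈ [0,1]: |(1−λ) f(mx) + λ ((x−a) f(ma) + (b−x) f(mb))/(b−a) − (1/(m(b−a))) ∫_{ma}^{mb} f(t) dt| ≤ (m A₁(1,λ)^{1−1/q}/(b−a)) { (x−a)² (|f'(mx)|^q A₂(α,1,λ) + m |f'(a)|^q A₃(α,1,λ))^{1/q} + (b−x)² (|f'(mx)|^q A₂(α,1,λ) + m |f'(b)|^q A₃(α,1,λ))^{1/q} }. -/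
open MeasureTheory Set intervalIntegral Real

/-! Integrating by parts against the kernel `t - λ` along the segments from `m a` and from `m b`
to `m x` writes the left-hand side as `(m (x-a)² I_a - m (b-x)² I_b) / (b-a)`, where
`I_c = ∫₀¹ (t-λ) f'((1-t) m c + t m x) dt`. The weighted power-mean inequality with weight `|t-λ|`
(of total mass `A₁(1,λ)`) bounds `|I_c|` by `A₁^(1-1/q) (∫₀¹ |t-λ| |f'|^q)^(1/q)`, and
`(α,m)`-convexity bounds `|f'|^q` on the segment by `t^α |f'(m x)|^q + m (1-t^α) |f'(c)|^q`,
whose integrals against `|t-λ|` are `A₂(α,1,λ)` and `A₃(α,1,λ)`. -/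

theorem integral_mul_le_weight_mul_Lp_of_nonneg {X : Type*} [MeasurableSpace X] {μ : Measure X}
    {w g : X → ℝ} {p : ℝ} (hp : 1 ≤ p) (hw : 0 ≤ w) (hg : 0 ≤ g)
    (hwi : Integrable w μ) (hgm : AEStronglyMeasurable g μ)
    (hwgi : Integrable (fun x => w x * g x ^ p) μ) :
    ∫ x, w x * g x ∂μ ≤ (∫ x, w x ∂μ) ^ (1 - 1 / p) * (∫ x, w x * g x ^ p ∂μ) ^ (1 / p) := by
  obtain rfl | hp1 := hp.eq_or_lt
  · simp
  set r := conjExponent p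
  have hpr : p.HolderConjugate r := .conjExponent hp1
  have hr : 1 / r = 1 - 1 / p := by rw [one_div, one_div, hpr.one_sub_inv]
  have hpow_r : ∀ x, (w x ^ (1 / r)) ^ r = w x := fun x => by
    rw [← rpow_mul (hw x), one_div_mul_cancel hpr.symm.ne_zero, rpow_one]
  have hpow_p : ∀ x, (w x ^ (1 / p) * g x) ^ p = w x * g x ^ p := fun x => by
    rw [mul_rpow (rpow_nonneg (hw x) _) (hg x), ← rpow_mul (hw x),
      one_div_mul_cancel hpr.ne_zero, rpow_one]
  have hprod : ∀ x, w x ^ (1 / r) * (w x ^ (1 / p) * g x) = w x * g x := fun x => by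
    rw [← mul_assoc, ← rpow_add' (hw x) (by rw [hpr.symm.one_div_add_one_div]; simp),
      hpr.symm.one_div_add_one_div, div_one, rpow_one]
  have hwm := hwi.aestronglyMeasurable.aemeasurable
  have hmem_r : MemLp (fun x => w x ^ (1 / r)) (ENNReal.ofReal r) μ := by
    refine (integrable_norm_rpow_iff (hwm.pow_const _).aestronglyMeasurable
      (by simpa using hpr.symm.pos) ENNReal.ofReal_ne_top).1 ?_
    rw [ENNReal.toReal_ofReal hpr.symm.nonneg]
    refine hwi.congr (.of_forall fun x => ?_)
    dsimp only
    rw [norm_of_nonneg (rpow_nonneg (hw x) _), hpow_r]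
  have hmem_p : MemLp (fun x => w x ^ (1 / p) * g x) (ENNReal.ofReal p) μ := by
    refine (integrable_norm_rpow_iff
      ((hwm.pow_const _).aestronglyMeasurable.mul hgm)
      (by simpa using hpr.pos) ENNReal.ofReal_ne_top).1 ?_
    rw [ENNReal.toReal_ofReal hpr.nonneg]
    refine hwgi.congr (.of_forall fun x => ?_)
    simp only [Pi.mul_apply]
    rw [norm_of_nonneg (mul_nonneg (rpow_nonneg (hw x) _) (hg x)), hpow_p]
  have hholder := integral_mul_le_Lp_mul_Lq_of_nonneg hpr.symm
    (.of_forall fun x => rpow_nonneg (hw x) _)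
    (.of_forall fun x => mul_nonneg (rpow_nonneg (hw x) _) (hg x)) hmem_r hmem_p
  simp only [hpow_r, hpow_p, hprod] at hholder
  rwa [hr] at hholder

lemma abs_mul_sub_mul_le {p q u v U V : ℝ} (hp : 0 ≤ p) (hq : 0 ≤ q) (hu : |u| ≤ U)
    (hv : |v| ≤ V) : |p * u - q * v| ≤ p * U + q * V := by
  refine (abs_sub _ _).trans ?_
  rw [abs_mul, abs_mul, abs_of_nonneg hp, abs_of_nonneg hq]
  gcongr

lemma one_sub_mul_add_mul_mem_uIcc {u v t : ℝ} (ht : t ∈ Icc (0 : ℝ) 1) :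
    (1 - t) * u + t * v ∈ uIcc u v := by
  simpa [← segment_eq_uIcc, AffineMap.lineMap_apply_ring] using lineMap_mem_segment ℝ u v ht

lemma uIcc_mul_subset_uIcc_mul (m : ℝ) {a b c d : ℝ} (hc : c ∈ uIcc a b) (hd : d ∈ uIcc a b) :
    uIcc (m * c) (m * d) ⊆ uIcc (m * a) (m * b) := by
  rw [← image_const_mul_uIcc, ← image_const_mul_uIcc]
  exact image_mono (uIcc_subset_uIcc hc hd)

lemma IntervalIntegrable.comp_one_sub_mul_add_mul {f : ℝ → ℝ} {u v : ℝ}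
    (hf : IntervalIntegrable f volume u v) :
    IntervalIntegrable (fun t => f ((1 - t) * u + t * v)) volume 0 1 := by
  obtain rfl | huv := eq_or_ne u v
  · simp_rw [← add_mul, sub_add_cancel, one_mul]
    exact intervalIntegrable_const
  have := (hf.comp_add_right u).comp_mul_left (c := v - u)
  rw [sub_self, zero_div, div_self (sub_ne_zero.2 huv.symm)] at this
  convert this using 2 with t
  ring_nf

theorem sub_sq_mul_integral_sub_mul_deriv_comp {f f' : ℝ → ℝ} {u v : ℝ} (lam : ℝ)
    (hf : ∀ y ∈ uIcc u v, HasDerivAt f (f' y) y) (hf' : IntervalIntegrable f' volume u v) :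
    (v - u) ^ 2 * ∫ t in (0 : ℝ)..1, (t - lam) * f' ((1 - t) * u + t * v) =
      (v - u) * ((1 - lam) * f v + lam * f u) - ∫ y in u..v, f y := by
  have hγ : ∀ t, (1 - t) * u + t * v = (v - u) * t + u := fun t => by ring
  have hcomp : ∀ t ∈ uIcc (0 : ℝ) 1,
      HasDerivAt (fun t => f ((1 - t) * u + t * v)) ((v - u) * f' ((1 - t) * u + t * v)) t := by
    intro t ht
    rw [uIcc_of_le zero_le_one] at ht
    have hlin : HasDerivAt (fun t : ℝ => (1 - t) * u + t * v) (v - u) t := by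
      simpa using ((hasDerivAt_id t).const_mul (v - u)).add_const u |>.congr_of_eventuallyEq
        (.of_forall hγ)
    exact (hf _ (one_sub_mul_add_mul_mem_uIcc ht)).comp t hlin |>.congr_deriv (mul_comm _ _)
  have hparts := integral_mul_deriv_eq_deriv_mul (u := fun t => t - lam)
    (fun t _ => (hasDerivAt_id t).sub_const lam) hcomp intervalIntegrable_const
    (hf'.comp_one_sub_mul_add_mul.const_mul (v - u))
  have hsubst : (v - u) * ∫ t in (0 : ℝ)..1, f ((1 - t) * u + t * v) = ∫ y in u..v, f y := by
    simp [hγ]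
  simp only [mul_left_comm _ (v - u), intervalIntegral.integral_const_mul, one_mul, sub_self,
    zero_mul, zero_add, sub_zero, add_zero, zero_sub, neg_mul, sub_neg_eq_add] at hparts
  rw [← hsubst, pow_two, mul_assoc, hparts]
  ring

theorem trapezoid_sub_average_eq {f f' : ℝ → ℝ} {m a b x : ℝ} (lam : ℝ) (hm : m ≠ 0)
    (hab : a ≠ b) (hx : x ∈ uIcc a b) (hf : ∀ y ∈ uIcc (m * a) (m * b), HasDerivAt f (f' y) y)
    (hf' : IntervalIntegrable f' volume (m * a) (m * b)) :
    (1 - lam) * f (m * x) + lam * (((x - a) * f (m * a) + (b - x) * f (m * b)) / (b - a)) -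
        (1 / (m * (b - a))) * ∫ t in (m * a)..(m * b), f t =
      (m * (x - a) ^ 2 * (∫ t in (0 : ℝ)..1, (t - lam) * f' ((1 - t) * (m * a) + t * (m * x))) -
        m * (b - x) ^ 2 * ∫ t in (0 : ℝ)..1, (t - lam) * f' ((1 - t) * (m * b) + t * (m * x))) /
        (b - a) := by
  have hsegA := uIcc_mul_subset_uIcc_mul m left_mem_uIcc hx
  have hsegB := uIcc_mul_subset_uIcc_mul m right_mem_uIcc hx
  have hidA := sub_sq_mul_integral_sub_mul_deriv_comp lam (fun y hy => hf y (hsegA hy))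
    (hf'.mono_set hsegA)
  have hidB := sub_sq_mul_integral_sub_mul_deriv_comp lam (fun y hy => hf y (hsegB hy))
    (hf'.mono_set hsegB)
  have hfc : ContinuousOn f (uIcc (m * a) (m * b)) := fun y hy =>
    (hf y hy).continuousAt.continuousWithinAt
  rw [integral_symm (m * x)] at hidB
  rw [← integral_add_adjacent_intervals (μ := volume) (hfc.mono hsegA).intervalIntegrable
    (hfc.mono (uIcc_comm (m * b) (m * x) ▸ hsegB)).intervalIntegrable]
  set Ia := ∫ t in (0 : ℝ)..1, (t - lam) * f' ((1 - t) * (m * a) + t * (m * x))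
  set Ib := ∫ t in (0 : ℝ)..1, (t - lam) * f' ((1 - t) * (m * b) + t * (m * x))
  have hba : b - a ≠ 0 := sub_ne_zero.2 hab.symm
  field_simp
  linear_combination hidB - hidA

lemma A1_one_eq_A2_zero (lam : ℝ) : A1 1 lam = A2 0 1 lam := by
  norm_num [A1, A2]
  ring

theorem integral_abs_sub_mul_rpow_eq_A2 {α lam : ℝ} (hα : 0 ≤ α) (hlam : lam ∈ Icc (0 : ℝ) 1) :
    ∫ t in (0 : ℝ)..1, |t - lam| * t ^ α = A2 α 1 lam := by
  obtain ⟨hlam0, hlam1⟩ := hlam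
  set P : ℝ → ℝ := fun t => t ^ (α + 2) / (α + 2) - lam * (t ^ (α + 1) / (α + 1))
  have hP : ∀ t, 0 ≤ t → HasDerivAt P ((t - lam) * t ^ α) t := by
    intro t ht
    have h2 := hasDerivAt_rpow_const (x := t) (p := α + 2) (Or.inr (by linarith))
    have h1 := hasDerivAt_rpow_const (x := t) (p := α + 1) (Or.inr (by linarith))
    refine ((h2.div_const (α + 2)).sub ((h1.div_const (α + 1)).const_mul lam)).congr_deriv ?_
    rw [show α + 2 - 1 = α + 1 by ring, add_sub_cancel_right, rpow_add_one' ht (by linarith)]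
    field_simp
  have hcont : Continuous fun t : ℝ => (t - lam) * t ^ α :=
    (continuous_id.sub continuous_const).mul (continuous_id.rpow_const fun _ => Or.inr hα)
  have hleft : ∫ t in (0 : ℝ)..lam, |t - lam| * t ^ α = -(P lam - P 0) := by
    rw [← integral_eq_sub_of_hasDerivAt
      (fun t ht => hP t (by rw [uIcc_of_le hlam0] at ht; exact ht.1))
      (hcont.intervalIntegrable _ _), ← intervalIntegral.integral_neg]
    refine integral_congr fun t ht => ?_
    rw [uIcc_of_le hlam0] at ht
    simp only [abs_of_nonpos (sub_nonpos.2 ht.2), neg_mul]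
  have hright : ∫ t in lam..1, |t - lam| * t ^ α = P 1 - P lam := by
    rw [← integral_eq_sub_of_hasDerivAt
      (fun t ht => hP t (by rw [uIcc_of_le hlam1] at ht; linarith [ht.1]))
      (hcont.intervalIntegrable _ _)]
    refine integral_congr fun t ht => ?_
    rw [uIcc_of_le hlam1] at ht
    simp only [abs_of_nonneg (sub_nonneg.2 ht.1)]
  have hcont' : Continuous fun t : ℝ => |t - lam| * t ^ α :=
    (continuous_id.sub continuous_const).abs.mul (continuous_id.rpow_const fun _ => Or.inr hα)
  rw [← integral_add_adjacent_intervals (b := lam) (hcont'.intervalIntegrable _ _)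
    (hcont'.intervalIntegrable _ _), hleft, hright]
  have hpow : lam ^ (α + 2) = lam * lam ^ (α + 1) := by
    rw [show α + 2 = α + 1 + 1 by ring, rpow_add_one' hlam0 (by linarith), mul_comm]
  simp only [P, A2, one_rpow, zero_rpow (by linarith : α + 2 ≠ 0),
    zero_rpow (by linarith : α + 1 ≠ 0)]
  rw [show 1 + (1 + α) / 1 = α + 2 by ring, hpow]
  field_simp
  ring

theorem integral_abs_sub_eq_A1 {lam : ℝ} (hlam : lam ∈ Icc (0 : ℝ) 1) :
    ∫ t in (0 : ℝ)..1, |t - lam| = A1 1 lam := by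
  simpa [A1_one_eq_A2_zero] using integral_abs_sub_mul_rpow_eq_A2 le_rfl hlam

theorem abs_integral_sub_mul_le {H : ℝ → ℝ} {lam α q X Y M : ℝ} (hlam : lam ∈ Icc (0 : ℝ) 1)
    (hα : 0 ≤ α) (hq : 1 ≤ q) (hH : IntervalIntegrable H volume 0 1)
    (hHq : ∀ t ∈ Icc (0 : ℝ) 1, |H t| ^ q ≤ t ^ α * X + M * (1 - t ^ α) * Y) :
    |∫ t in (0 : ℝ)..1, (t - lam) * H t| ≤
      A1 1 lam ^ (1 - 1 / q) * (X * A2 α 1 lam + M * Y * A3 α 1 lam) ^ (1 / q) := by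
  set W : ℝ → ℝ := fun t => |t - lam|
  set B : ℝ → ℝ := fun t => t ^ α * X + M * (1 - t ^ α) * Y
  have hW : Continuous W := (continuous_id.sub continuous_const).abs
  have hpow : Continuous fun t : ℝ => t ^ α := continuous_id.rpow_const fun _ => Or.inr hα
  have hWB : Continuous fun t => W t * B t :=
    hW.mul ((hpow.mul continuous_const).add
      ((continuous_const.mul (continuous_const.sub hpow)).mul continuous_const))
  have hWB_eq : ∫ t in (0 : ℝ)..1, W t * B t = X * A2 α 1 lam + M * Y * A3 α 1 lam := by
    have hWpow : IntervalIntegrable (fun t => W t * t ^ α) volume 0 1 :=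
      (hW.mul hpow).intervalIntegrable _ _
    have hWi : IntervalIntegrable W volume 0 1 := hW.intervalIntegrable _ _
    have hsplit : (fun t => W t * B t) =
        fun t => X * (W t * t ^ α) + M * Y * (W t - W t * t ^ α) := by
      ext t; ring
    rw [hsplit, integral_add (hWpow.const_mul _) ((hWi.sub hWpow).const_mul _),
      intervalIntegral.integral_const_mul, intervalIntegral.integral_const_mul,
      integral_sub hWi hWpow, integral_abs_sub_eq_A1 hlam, integral_abs_sub_mul_rpow_eq_A2 hα hlam,
      A3]
  have hWHq_le : ∀ t ∈ Icc (0 : ℝ) 1, W t * |H t| ^ q ≤ W t * B t := fun t ht =>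
    mul_le_mul_of_nonneg_left (hHq t ht) (abs_nonneg _)
  have hHm := hH.1.aestronglyMeasurable.norm
  have hWHq : IntervalIntegrable (fun t => W t * |H t| ^ q) volume 0 1 :=
    (intervalIntegrable_iff_integrableOn_Ioc_of_le zero_le_one).2 <|
    (hWB.integrableOn_Icc.mono_set Ioc_subset_Icc_self).mono'
      (hW.aestronglyMeasurable.mul (hHm.aemeasurable.pow_const q).aestronglyMeasurable)
      ((ae_restrict_iff' measurableSet_Ioc).2 (.of_forall fun t ht => by
        rw [norm_of_nonneg (by positivity)]; exact hWHq_le t (Ioc_subset_Icc_self ht)))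
  have hpm := integral_mul_le_weight_mul_Lp_of_nonneg hq (fun t => abs_nonneg (t - lam))
    (fun t => abs_nonneg (H t)) (hW.integrableOn_Icc.mono_set Ioc_subset_Icc_self) hHm hWHq.1
  simp only [← integral_of_le zero_le_one] at hpm
  have hA1 : 0 ≤ A1 1 lam :=
    integral_abs_sub_eq_A1 hlam ▸ integral_nonneg zero_le_one fun t _ => abs_nonneg _
  calc |∫ t in (0 : ℝ)..1, (t - lam) * H t| ≤ ∫ t in (0 : ℝ)..1, W t * |H t| := by
        refine (abs_integral_le_integral_abs zero_le_one).trans_eq ?_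
        simp only [abs_mul, W]
    _ ≤ A1 1 lam ^ (1 - 1 / q) * (∫ t in (0 : ℝ)..1, W t * |H t| ^ q) ^ (1 / q) := by
        rwa [← integral_abs_sub_eq_A1 hlam]
    _ ≤ A1 1 lam ^ (1 - 1 / q) * (X * A2 α 1 lam + M * Y * A3 α 1 lam) ^ (1 / q) := by
        rw [← hWB_eq]
        gcongr
        · exact integral_nonneg zero_le_one fun t _ => by positivity
        · exact integral_mono_on zero_le_one hWHq (hWB.intervalIntegrable _ _) hWHq_le

theorem abs_integral_sub_mul_comp_le_of_alphaMConvexOn {f' : ℝ → ℝ} {α m q c d u v lam : ℝ}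
    (hconv : AlphaMConvexOn α m c d fun y => |f' y| ^ q) (hu : u ∈ Icc c d) (hv : v ∈ Icc c d)
    (hseg : uIcc (m * u) v ⊆ Icc c d) (hf' : IntervalIntegrable f' volume (m * u) v)
    (hlam : lam ∈ Icc (0 : ℝ) 1) (hα : 0 ≤ α) (hq : 1 ≤ q) :
    |∫ t in (0 : ℝ)..1, (t - lam) * f' ((1 - t) * (m * u) + t * v)| ≤
      A1 1 lam ^ (1 - 1 / q) *
        (|f' v| ^ q * A2 α 1 lam + m * |f' u| ^ q * A3 α 1 lam) ^ (1 / q) := by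
  refine abs_integral_sub_mul_le hlam hα hq hf'.comp_one_sub_mul_add_mul fun t ht => ?_
  have hpt : (1 - t) * (m * u) + t * v = t * v + m * (1 - t) * u := by ring
  rw [hpt]
  exact hconv v hv u hu t ht (hpt ▸ hseg (one_sub_mul_add_mul_mem_uIcc ht))

theorem powmean_theta_one
    (I : Set ℝ) (hI : Set.OrdConnected I) (hI0 : I ⊆ Set.Ici (0:ℝ)) (f f' : ℝ → ℝ) (m a b : ℝ)
    (hm : m ∈ Set.Ioc (0:ℝ) 1) (hab : a < b)
    (hma : m * a ∈ interior I) (hb : b ∈ interior I)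
    (hf : ∀ y ∈ interior I, HasDerivAt f (f' y) y)
    (hint : IntervalIntegrable f' MeasureTheory.volume (m * a) (m * b))
    (α q : ℝ) (hα : α ∈ Set.Icc (0:ℝ) 1) (hq : 1 ≤ q)
    (hconv : AlphaMConvexOn α m (m * a) b (fun u => |f' u| ^ q)) :
    ∀ x ∈ Set.Icc a b, ∀ lam ∈ Set.Icc (0:ℝ) 1,
      |(1 - lam) * f (m * x) +
          lam * (((x - a) * f (m * a) + (b - x) * f (m * b)) / (b - a)) -
          (1 / (m * (b - a))) * ∫ t in (m * a)..(m * b), f t| ≤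
        m * (A1 1 lam) ^ (1 - 1 / q) / (b - a) *
          ((x - a) ^ 2 *
              (|f' (m * x)| ^ q * A2 α 1 lam + m * |f' a| ^ q * A3 α 1 lam) ^ (1 / q) +
            (b - x) ^ 2 *
              (|f' (m * x)| ^ q * A2 α 1 lam + m * |f' b| ^ q * A3 α 1 lam) ^ (1 / q)) := by
  intro x hx lam hlam
  obtain ⟨hm0, hm1⟩ := hm
  have hba : 0 < b - a := sub_pos.2 hab
  have ha0 : 0 ≤ a := nonneg_of_mul_nonneg_right (hI0 (interior_subset hma)) hm0
  have hJ : uIcc (m * a) (m * b) ⊆ Icc (m * a) b := by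
    rw [uIcc_of_le (by gcongr)]
    exact Icc_subset_Icc_right (mul_le_of_le_one_left (by linarith) hm1)
  have hest : ∀ c ∈ Icc a b,
      |∫ t in (0 : ℝ)..1, (t - lam) * f' ((1 - t) * (m * c) + t * (m * x))| ≤
        A1 1 lam ^ (1 - 1 / q) *
          (|f' (m * x)| ^ q * A2 α 1 lam + m * |f' c| ^ q * A3 α 1 lam) ^ (1 / q) := by
    intro c hc
    have hseg := uIcc_mul_subset_uIcc_mul m (Icc_subset_uIcc hc) (Icc_subset_uIcc hx)
    exact abs_integral_sub_mul_comp_le_of_alphaMConvexOn hconv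
      ⟨(mul_le_of_le_one_left ha0 hm1).trans hc.1, hc.2⟩ (hJ (hseg right_mem_uIcc))
      (hseg.trans hJ) (hint.mono_set hseg) hlam hα.1 hq
  rw [trapezoid_sub_average_eq lam hm0.ne' hab.ne (Icc_subset_uIcc hx)
      (fun y hy => hf y (hI.interior.out hma hb (hJ hy))) hint,
    abs_div, abs_of_pos hba, div_le_iff₀ hba]
  refine (abs_mul_sub_mul_le ?_ ?_ (hest a (left_mem_Icc.2 hab.le))
    (hest b (right_mem_Icc.2 hab.le))).trans_eq ?_
  · positivity
  · positivity
  · field_simp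
end

section
/- Let f : I ⊂ [0,∞) → ℝ be differentiable on I°, m ∈ (0,1], ma, b ∈ I° with a < b, and suppose f' is integrable on [ma, mb]. If |f'|^q is (α,m)-convex on [ma,b] for some fixed q ≥ 1 and (α,m) ∈ [0,1]², then for every θ > 0 the midpoint-type inequality holds: |f(m(a+b)/2) − (Γ(θ+1) 2^{θ−1}/(m^θ (b−a)^θ)) [J_{(m(a+b)/2)−}^θ f(ma) + J_{(m(a+b)/2)+}^θ f(mb)]| ≤ (m(b−a)/4) (1/(θ+1)) (1/(α+θ+1))^{1/q} { [(θ+1)|f'(m(a+b)/2)|^q + αm |f'(a)|^q]^{1/q} + [(θ+1)|f'(m(a+b)/2)|^q + αm |f'(b)|^q]^{1/q} }. -/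
open MeasureTheory Set intervalIntegral Real

/-!
Put `h = m(b-a)/2`. Integrating by parts against `(t - ma)^θ` on `[ma, ma + h]` and against
`(mb - t)^θ` on `[mb - h, mb]`, then rescaling both halves to `[0, 1]`, turns the quantity inside
the absolute value into `m(b-a)/4 · (∫₀¹ s^θ f'(ma + hs) ds - ∫₀¹ s^θ f'(mb - hs) ds)`.
Since `ma + hs = s · m(a+b)/2 + m(1-s) a` and `mb - hs = s · m(a+b)/2 + m(1-s) b`,
(α,m)-convexity bounds `|f'|^q` at these points by `s^α |f'(m(a+b)/2)|^q + m(1-s^α) |f'(a)|^q`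
(resp. `|f'(b)|^q`), and the power-mean inequality for the weight `s^θ` on `[0, 1]` bounds each
integral by the `q`-th root of the integral of that bound against `s^θ`.
-/

theorem integral_mul_abs_le_powMean {X : Type*} [MeasurableSpace X] {μ : Measure X}
    {w g : X → ℝ} {q : ℝ} (hq : 1 ≤ q) (hw : 0 ≤ᵐ[μ] w) (hwi : Integrable w μ)
    (hg : AEStronglyMeasurable g μ) (hwg : Integrable (fun x ↦ w x * |g x| ^ q) μ) :
    ∫ x, w x * |g x| ∂μ ≤ (∫ x, w x ∂μ) ^ (1 - 1 / q) * (∫ x, w x * |g x| ^ q ∂μ) ^ (1 / q) := by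
  rcases hq.eq_or_lt with rfl | hq1
  · simp
  set p := q / (q - 1)
  have hpq : p.HolderConjugate q := (Real.HolderConjugate.conjExponent hq1).symm
  set F : X → ℝ := fun x ↦ w x ^ (1 / p)
  set G : X → ℝ := fun x ↦ w x ^ (1 / q) * |g x|
  have hFG : (fun x ↦ ‖F x‖ * ‖G x‖) =ᵐ[μ] fun x ↦ w x * |g x| := by
    filter_upwards [hw] with x (hx : 0 ≤ w x)
    rw [Real.norm_of_nonneg (by positivity), Real.norm_of_nonneg (by positivity), ← mul_assoc,
      ← Real.rpow_add' hx (by rw [hpq.one_div_add_one_div]; simp), hpq.one_div_add_one_div,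
      one_div_one, Real.rpow_one]
  have hFp : (fun x ↦ ‖F x‖ ^ p) =ᵐ[μ] w := by
    filter_upwards [hw] with x (hx : 0 ≤ w x)
    rw [Real.norm_of_nonneg (by positivity), ← Real.rpow_mul hx,
      one_div_mul_cancel hpq.pos.ne', Real.rpow_one]
  have hGq : (fun x ↦ ‖G x‖ ^ q) =ᵐ[μ] fun x ↦ w x * |g x| ^ q := by
    filter_upwards [hw] with x (hx : 0 ≤ w x)
    rw [Real.norm_of_nonneg (by positivity), Real.mul_rpow (by positivity) (abs_nonneg _),
      ← Real.rpow_mul hx, one_div_mul_cancel hpq.symm.pos.ne', Real.rpow_one]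
  have hmemLp {H : X → ℝ} {r : ℝ} (hr : 0 < r) (hH : AEStronglyMeasurable H μ)
      (hHr : Integrable (fun x ↦ ‖H x‖ ^ r) μ) : MemLp H (ENNReal.ofReal r) μ := by
    rw [← integrable_norm_rpow_iff hH (by simpa using hr) ENNReal.ofReal_ne_top,
      ENNReal.toReal_ofReal hr.le]
    exact hHr
  have hrpow {r : ℝ} (hr : 0 < r) : AEStronglyMeasurable (fun x ↦ w x ^ (1 / r)) μ :=
    (Real.continuous_rpow_const (by positivity)).comp_aestronglyMeasurable hwi.1
  have holder := integral_mul_norm_le_Lp_mul_Lq (f := F) (g := G) hpq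
    (hmemLp hpq.pos (hrpow hpq.pos) (hwi.congr hFp.symm))
    (hmemLp hpq.symm.pos ((hrpow hpq.symm.pos).mul (continuous_abs.comp_aestronglyMeasurable hg))
      (hwg.congr hGq.symm))
  rwa [integral_congr_ae hFG, integral_congr_ae hFp, integral_congr_ae hGq, one_div p,
    ← hpq.symm.one_sub_inv, ← one_div] at holder

theorem Gamma_add_one_mul_rlLeft {f f' : ℝ → ℝ} {θ c d : ℝ} (hθ : 0 < θ) (hcd : c ≤ d)
    (hf : ∀ x ∈ Icc c d, HasDerivAt f (f' x) x) (hf' : IntervalIntegrable f' volume c d) :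
    Gamma (θ + 1) * rlLeft θ c d f = (d - c) ^ θ * f d - ∫ t in c..d, (t - c) ^ θ * f' t := by
  have hu' : IntervalIntegrable (fun t ↦ θ * (t - c) ^ (θ - 1)) volume c d := by
    have := (intervalIntegrable_rpow' (r := θ - 1) (a := 0) (b := d - c)
      (by linarith)).comp_sub_right c
    rw [zero_add, sub_add_cancel] at this
    exact this.const_mul θ
  have ibp := integral_mul_deriv_eq_deriv_mul_of_hasDerivAt (u := fun t ↦ (t - c) ^ θ) (v := f)
    ((Real.continuous_rpow_const hθ.le).comp (continuous_sub_right c)).continuousOn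
    (fun x hx ↦ (hf x (by rwa [uIcc_of_le hcd] at hx)).continuousAt.continuousWithinAt)
    (fun x hx ↦ by
      rw [min_eq_left hcd] at hx
      simpa using ((hasDerivAt_id x).sub_const c).rpow_const (Or.inl (sub_pos.2 hx.1).ne'))
    (fun x hx ↦ hf x (Ioo_subset_Icc_self (by rwa [min_eq_left hcd, max_eq_right hcd] at hx)))
    hu' hf'
  rw [ibp, sub_self, Real.zero_rpow hθ.ne', zero_mul, sub_zero, rlLeft, Gamma_add_one hθ.ne']
  simp only [mul_assoc, intervalIntegral.integral_const_mul]
  field_simp [(Gamma_pos_of_pos hθ).ne']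
  ring

theorem Gamma_add_one_mul_rlRight {f f' : ℝ → ℝ} {θ c d : ℝ} (hθ : 0 < θ) (hcd : c ≤ d)
    (hf : ∀ x ∈ Icc c d, HasDerivAt f (f' x) x) (hf' : IntervalIntegrable f' volume c d) :
    Gamma (θ + 1) * rlRight θ c d f = (d - c) ^ θ * f c + ∫ t in c..d, (d - t) ^ θ * f' t := by
  have hu' : IntervalIntegrable (fun t ↦ -(θ * (d - t) ^ (θ - 1))) volume c d := by
    have := (intervalIntegrable_rpow' (r := θ - 1) (a := d - c) (b := 0)
      (by linarith)).comp_sub_left d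
    rw [sub_sub_cancel, sub_zero] at this
    exact (this.const_mul θ).neg
  have ibp := integral_mul_deriv_eq_deriv_mul_of_hasDerivAt (u := fun t ↦ (d - t) ^ θ) (v := f)
    ((Real.continuous_rpow_const hθ.le).comp (continuous_sub_left d)).continuousOn
    (fun x hx ↦ (hf x (by rwa [uIcc_of_le hcd] at hx)).continuousAt.continuousWithinAt)
    (fun x hx ↦ by
      rw [max_eq_right hcd] at hx
      simpa using ((hasDerivAt_id x).const_sub d).rpow_const (Or.inl (sub_pos.2 hx.2).ne'))
    (fun x hx ↦ hf x (Ioo_subset_Icc_self (by rwa [min_eq_left hcd, max_eq_right hcd] at hx)))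
    hu' hf'
  rw [ibp, sub_self, Real.zero_rpow hθ.ne', zero_mul, zero_sub, rlRight, Gamma_add_one hθ.ne']
  simp only [neg_mul, intervalIntegral.integral_neg, mul_assoc, intervalIntegral.integral_const_mul]
  field_simp [(Gamma_pos_of_pos hθ).ne']
  ring

theorem integral_sub_rpow_mul_comp_add_mul (g : ℝ → ℝ) {θ c h : ℝ} (hh : 0 < h) :
    ∫ t in c..c + h, (t - c) ^ θ * g t = h ^ (θ + 1) * ∫ s in (0:ℝ)..1, s ^ θ * g (c + h * s) := by
  have := intervalIntegral.smul_integral_comp_add_mul (a := 0) (b := 1)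
    (fun t ↦ (t - c) ^ θ * g t) h c
  simp only [mul_zero, add_zero, mul_one, add_sub_cancel_left, smul_eq_mul] at this
  rw [← this, Real.rpow_add_one hh.ne', mul_comm (h ^ θ) h, mul_assoc]
  congr 1
  rw [← intervalIntegral.integral_const_mul]
  refine intervalIntegral.integral_congr fun s hs ↦ ?_
  rw [uIcc_of_le zero_le_one] at hs
  simp only [Real.mul_rpow hh.le hs.1, mul_assoc]

theorem integral_sub_rpow_mul_comp_sub_mul (g : ℝ → ℝ) {θ d h : ℝ} (hh : 0 < h) :
    ∫ t in d - h..d, (d - t) ^ θ * g t = h ^ (θ + 1) * ∫ s in (0:ℝ)..1, s ^ θ * g (d - h * s) := by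
  have := intervalIntegral.smul_integral_comp_sub_mul (a := 0) (b := 1)
    (fun t ↦ (d - t) ^ θ * g t) h d
  simp only [mul_zero, sub_zero, mul_one, sub_sub_cancel, smul_eq_mul] at this
  rw [← this, Real.rpow_add_one hh.ne', mul_comm (h ^ θ) h, mul_assoc]
  congr 1
  rw [← intervalIntegral.integral_const_mul]
  refine intervalIntegral.integral_congr fun s hs ↦ ?_
  rw [uIcc_of_le zero_le_one] at hs
  simp only [Real.mul_rpow hh.le hs.1, mul_assoc]

theorem midpoint_sub_rl_eq {f f' : ℝ → ℝ} {θ c d : ℝ} (hθ : 0 < θ) (hcd : c < d)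
    (hf : ∀ x ∈ Icc c d, HasDerivAt f (f' x) x) (hf' : IntervalIntegrable f' volume c d) :
    f ((c + d) / 2) - Gamma (θ + 1) * 2 ^ (θ - 1) / (d - c) ^ θ *
        (rlLeft θ c ((c + d) / 2) f + rlRight θ ((c + d) / 2) d f) =
      (d - c) / 4 * ((∫ s in (0:ℝ)..1, s ^ θ * f' (c + (d - c) / 2 * s)) -
        ∫ s in (0:ℝ)..1, s ^ θ * f' (d - (d - c) / 2 * s)) := by
  set h := (d - c) / 2
  have hh : 0 < h := by positivity
  have hmid : (c + d) / 2 = c + h := by ring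
  have hmid' : d - h = c + h := by ring
  have hL := Gamma_add_one_mul_rlLeft hθ (by linarith : c ≤ c + h)
    (fun x hx ↦ hf x ⟨hx.1, by linarith [hx.2]⟩)
    (hf'.mono_set (uIcc_subset_uIcc_left (by rw [uIcc_of_le hcd.le]; constructor <;> linarith)))
  have hR := Gamma_add_one_mul_rlRight hθ (by linarith : d - h ≤ d)
    (fun x hx ↦ hf x ⟨by linarith [hx.1], hx.2⟩)
    (hf'.mono_set (uIcc_subset_uIcc_right (by rw [uIcc_of_le hcd.le]; constructor <;> linarith)))
  rw [add_sub_cancel_left, integral_sub_rpow_mul_comp_add_mul f' hh] at hL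
  rw [sub_sub_cancel, integral_sub_rpow_mul_comp_sub_mul f' hh, hmid'] at hR
  have hdc : (d - c) ^ θ = 2 * 2 ^ (θ - 1) * h ^ θ := by
    rw [show d - c = 2 * h by ring, Real.mul_rpow zero_le_two hh.le,
      ← Real.rpow_one_add' zero_le_two (by linarith), add_sub_cancel]
  rw [hmid, hdc, show (d - c) / 4 = h / 2 by ring]
  rw [Real.rpow_add_one hh.ne'] at hL hR
  field_simp
  linear_combination -hL - hR

theorem integral_rpow_mul_alphaM_combination {θ α m X Y : ℝ} (hθ : 0 ≤ θ) (hα : 0 ≤ α) :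
    ∫ s in (0:ℝ)..1, s ^ θ * (s ^ α * X + m * (1 - s ^ α) * Y) =
      ((θ + 1) * X + α * m * Y) / ((θ + 1) * (α + θ + 1)) := by
  have hpow : ∀ s ∈ uIcc (0:ℝ) 1, s ^ θ * (s ^ α * X + m * (1 - s ^ α) * Y) =
      (X - m * Y) * s ^ (θ + α) + m * Y * s ^ θ := by
    intro s hs
    rw [uIcc_of_le zero_le_one] at hs
    rw [Real.rpow_add_of_nonneg hs.1 hθ hα]
    ring
  rw [intervalIntegral.integral_congr hpow, intervalIntegral.integral_add
      ((intervalIntegrable_rpow' (by linarith)).const_mul _)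
      ((intervalIntegrable_rpow' (by linarith)).const_mul _),
    intervalIntegral.integral_const_mul, intervalIntegral.integral_const_mul,
    integral_rpow (Or.inl (by linarith)), integral_rpow (Or.inl (by linarith)),
    Real.one_rpow, Real.one_rpow, Real.zero_rpow (by positivity), Real.zero_rpow (by positivity)]
  field_simp
  ring

theorem abs_integral_rpow_mul_le_powMean {g : ℝ → ℝ} {θ q : ℝ} (hθ : 0 ≤ θ) (hq : 1 ≤ q)
    (hg : AEStronglyMeasurable g (volume.restrict (Ioc 0 1)))
    (hgq : IntervalIntegrable (fun s ↦ s ^ θ * |g s| ^ q) volume 0 1) :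
    |∫ s in (0:ℝ)..1, s ^ θ * g s| ≤
      (1 / (θ + 1)) ^ (1 - 1 / q) * (∫ s in (0:ℝ)..1, s ^ θ * |g s| ^ q) ^ (1 / q) := by
  have hw : 0 ≤ᵐ[volume.restrict (Ioc 0 1)] fun s : ℝ ↦ s ^ θ := by
    filter_upwards [ae_restrict_mem measurableSet_Ioc] with s hs using Real.rpow_nonneg hs.1.le θ
  have hmean := integral_mul_abs_le_powMean hq hw (intervalIntegrable_rpow' (by linarith)).1
    hg hgq.1
  simp only [← intervalIntegral.integral_of_le zero_le_one] at hmean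
  rw [integral_rpow (Or.inl (by linarith)), Real.one_rpow, Real.zero_rpow (by positivity),
    sub_zero] at hmean
  refine (intervalIntegral.abs_integral_le_integral_abs zero_le_one).trans (le_of_eq_of_le ?_ hmean)
  refine intervalIntegral.integral_congr fun s hs ↦ ?_
  rw [uIcc_of_le zero_le_one] at hs
  simp only [abs_mul, abs_of_nonneg (Real.rpow_nonneg hs.1 θ)]

theorem abs_integral_rpow_mul_le_of_alphaM {g : ℝ → ℝ} {θ α q m X Y : ℝ} (hθ : 0 ≤ θ)
    (hα : 0 ≤ α) (hq : 1 ≤ q) (hg : AEStronglyMeasurable g (volume.restrict (Ioc 0 1)))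
    (hbound : ∀ s ∈ Icc (0:ℝ) 1, |g s| ^ q ≤ s ^ α * X + m * (1 - s ^ α) * Y) :
    |∫ s in (0:ℝ)..1, s ^ θ * g s| ≤
      1 / (θ + 1) * (1 / (α + θ + 1)) ^ (1 / q) * ((θ + 1) * X + α * m * Y) ^ (1 / q) := by
  set W := (θ + 1) * X + α * m * Y
  have hbound' : ∀ s ∈ Icc (0:ℝ) 1,
      s ^ θ * |g s| ^ q ≤ s ^ θ * (s ^ α * X + m * (1 - s ^ α) * Y) := fun s hs ↦
    mul_le_mul_of_nonneg_left (hbound s hs) (Real.rpow_nonneg hs.1 θ)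
  have hBi : IntervalIntegrable (fun s : ℝ ↦ s ^ θ * (s ^ α * X + m * (1 - s ^ α) * Y))
      volume 0 1 := by
    have := Real.continuous_rpow_const hθ
    have := Real.continuous_rpow_const hα
    exact Continuous.intervalIntegrable (by fun_prop) 0 1
  have hgq : IntervalIntegrable (fun s ↦ s ^ θ * |g s| ^ q) volume 0 1 := by
    rw [intervalIntegrable_iff_integrableOn_Ioc_of_le zero_le_one]
    refine Integrable.mono' hBi.1 ((Real.continuous_rpow_const hθ).aestronglyMeasurable.mul
      ((continuous_abs.rpow_const fun _ ↦ Or.inr (by linarith)).comp_aestronglyMeasurable hg)) ?_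
    filter_upwards [ae_restrict_mem measurableSet_Ioc] with s hs
    have := Real.rpow_nonneg hs.1.le θ
    rw [Real.norm_of_nonneg (by positivity)]
    exact hbound' s (Ioc_subset_Icc_self hs)
  have hmono : ∫ s in (0:ℝ)..1, s ^ θ * |g s| ^ q ≤ W / ((θ + 1) * (α + θ + 1)) := by
    rw [← integral_rpow_mul_alphaM_combination hθ hα]
    exact intervalIntegral.integral_mono_on zero_le_one hgq hBi hbound'
  have hgq_nonneg : 0 ≤ ∫ s in (0:ℝ)..1, s ^ θ * |g s| ^ q :=
    intervalIntegral.integral_nonneg zero_le_one fun s hs ↦ by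
      have := Real.rpow_nonneg hs.1 θ; positivity
  have hW : 0 ≤ W := by
    have hD : 0 < (θ + 1) * (α + θ + 1) := by positivity
    simpa [div_mul_cancel₀ _ hD.ne'] using mul_nonneg (hgq_nonneg.trans hmono) hD.le
  calc |∫ s in (0:ℝ)..1, s ^ θ * g s|
      ≤ (1 / (θ + 1)) ^ (1 - 1 / q) * (∫ s in (0:ℝ)..1, s ^ θ * |g s| ^ q) ^ (1 / q) :=
        abs_integral_rpow_mul_le_powMean hθ hq hg hgq
    _ ≤ (1 / (θ + 1)) ^ (1 - 1 / q) * (W / ((θ + 1) * (α + θ + 1))) ^ (1 / q) := by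
        gcongr
    _ = 1 / (θ + 1) * (1 / (α + θ + 1)) ^ (1 / q) * W ^ (1 / q) := by
        rw [show W / ((θ + 1) * (α + θ + 1)) = 1 / (θ + 1) * (1 / (α + θ + 1) * W) by
            field_simp, Real.mul_rpow (by positivity) (by positivity),
          Real.mul_rpow (by positivity) hW, ← mul_assoc, ← Real.rpow_add (by positivity),
          sub_add_cancel, Real.rpow_one, mul_assoc]

theorem IntervalIntegrable.comp_add_mul_unitInterval {f : ℝ → ℝ} {c h : ℝ} (hh : h ≠ 0)
    (hf : IntervalIntegrable f volume c (c + h)) :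
    IntervalIntegrable (fun s ↦ f (c + h * s)) volume 0 1 := by
  simpa [hh] using (hf.comp_add_left c).comp_mul_left (c := h)

theorem IntervalIntegrable.comp_sub_mul_unitInterval {f : ℝ → ℝ} {d h : ℝ} (hh : h ≠ 0)
    (hf : IntervalIntegrable f volume (d - h) d) :
    IntervalIntegrable (fun s ↦ f (d - h * s)) volume 0 1 := by
  simpa [sub_eq_add_neg] using hf.symm.comp_add_mul_unitInterval (neg_ne_zero.2 hh)

theorem AlphaMConvexOn.le_of_eq {α m c d : ℝ} {g : ℝ → ℝ} (hg : AlphaMConvexOn α m c d g)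
    {u v t x : ℝ} (hu : u ∈ Icc c d) (hv : v ∈ Icc c d) (ht : t ∈ Icc (0:ℝ) 1)
    (hx : x ∈ Icc c d) (hxe : t * u + m * (1 - t) * v = x) :
    g x ≤ t ^ α * g u + m * (1 - t ^ α) * g v := by
  subst hxe
  exact hg u hu v hv t ht hx

theorem midpoint_powmean
    (I : Set ℝ) (hI : Set.OrdConnected I) (hI0 : I ⊆ Set.Ici (0:ℝ)) (f f' : ℝ → ℝ) (m a b : ℝ)
    (hm : m ∈ Set.Ioc (0:ℝ) 1) (hab : a < b)
    (hma : m * a ∈ interior I) (hb : b ∈ interior I)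
    (hf : ∀ y ∈ interior I, HasDerivAt f (f' y) y)
    (hint : IntervalIntegrable f' MeasureTheory.volume (m * a) (m * b))
    (α q : ℝ) (hα : α ∈ Set.Icc (0:ℝ) 1) (hq : 1 ≤ q)
    (hconv : AlphaMConvexOn α m (m * a) b (fun u => |f' u| ^ q)) :
    ∀ θ : ℝ, 0 < θ →
      |f (m * (a + b) / 2) -
          Real.Gamma (θ + 1) * 2 ^ (θ - 1) / (m ^ θ * (b - a) ^ θ) *
            (rlLeft θ (m * a) (m * (a + b) / 2) f + rlRight θ (m * (a + b) / 2) (m * b) f)| ≤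
        m * (b - a) / 4 * (1 / (θ + 1)) * (1 / (α + θ + 1)) ^ (1 / q) *
          (((θ + 1) * |f' (m * (a + b) / 2)| ^ q + α * m * |f' a| ^ q) ^ (1 / q) +
            ((θ + 1) * |f' (m * (a + b) / 2)| ^ q + α * m * |f' b| ^ q) ^ (1 / q)) := by
  intro θ hθ
  obtain ⟨hm0, hm1⟩ := hm
  have ha : 0 ≤ a := (mul_nonneg_iff_of_pos_left hm0).1 (hI0 (interior_subset hma))
  have hmab : m * a < m * b := mul_lt_mul_of_pos_left hab hm0
  have hmb : m * b ≤ b := by nlinarith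
  set h := (m * b - m * a) / 2 with h_def
  have hh : 0 < h := by linarith
  have hmid : m * a + h ∈ uIcc (m * a) (m * b) := by
    rw [uIcc_of_le hmab.le]; constructor <;> linarith
  have hmid' : m * b - h ∈ uIcc (m * a) (m * b) := by
    rw [uIcc_of_le hmab.le]; constructor <;> linarith
  have hu : (m * a + m * b) / 2 ∈ Icc (m * a) b := ⟨by linarith, by linarith⟩
  have hA := abs_integral_rpow_mul_le_of_alphaM hθ.le hα.1 hq (g := fun s ↦ f' (m * a + h * s))
    ((hint.mono_set (uIcc_subset_uIcc_left hmid)).comp_add_mul_unitInterval hh.ne').1.1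
    fun s hs ↦ hconv.le_of_eq hu ⟨by nlinarith, hab.le⟩ hs
      ⟨by nlinarith [hs.1], by nlinarith [hs.2]⟩ (by ring)
  have hB := abs_integral_rpow_mul_le_of_alphaM hθ.le hα.1 hq (g := fun s ↦ f' (m * b - h * s))
    ((hint.mono_set (uIcc_subset_uIcc_right hmid')).comp_sub_mul_unitInterval hh.ne').1.1
    fun s hs ↦ hconv.le_of_eq hu ⟨by linarith, le_rfl⟩ hs
      ⟨by nlinarith [hs.2], by nlinarith [hs.1]⟩ (by ring)
  rw [show m * (a + b) / 2 = (m * a + m * b) / 2 by ring,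
    show m ^ θ * (b - a) ^ θ = (m * b - m * a) ^ θ by
      rw [← Real.mul_rpow hm0.le (by linarith), mul_sub],
    midpoint_sub_rl_eq hθ hmab (fun x hx ↦ hf x (hI.interior.out hma hb ⟨hx.1, hx.2.trans hmb⟩))
      hint, abs_mul, abs_of_pos (by linarith)]
  refine (mul_le_mul_of_nonneg_left ((abs_sub _ _).trans (add_le_add hA hB))
    (by linarith)).trans_eq ?_
  ring
end

section
/- Let f : I ⊂ [0,∞) → ℝ be differentiable on I°, m ∈ (0,1], ma, b ∈ I° with a < b, and suppose f' is integrable on [ma, mb]. If |f'|^q is (α,m)-convex on [ma,b] for some fixed q ≥ 1 and (α,m) ∈ [0,1]², then for every x ∈ [a,b] and θ > 0 the generalized trapezoid-type inequality holds: |((x−a)^θ f(ma) + (b−x)^θ f(mb))/(b−a) − (Γ(θ+1)/(m^θ (b−a))) [J_{(mx)−}^θ f(ma) + J_{(mx)+}^θ f(mb)]| ≤ (m/(b−a)) (θ/(θ+1))^{1−1/q} { (x−a)^{θ+1} ( |f'(mx)|^q · θ/((α+1)(α+θ+1)) + m |f'(a)|^q · θα(α+θ+2)/((θ+1)(α+1)(α+θ+1))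 )^{1/q} + (b−x)^{θ+1} ( |f'(mx)|^q · θ/((α+1)(α+θ+1)) + m |f'(b)|^q · θα(α+θ+2)/((θ+1)(α+1)(α+θ+1)) )^{1/q} }. -/
open MeasureTheory Set intervalIntegral Real

/-!
Integrating by parts against the kernel `1 - t ^ θ` along the segments from `m a` and from `m b`
to `m x` writes the left-hand side as `m / (b - a)` times
`(b - x) ^ (θ + 1) * J_b - (x - a) ^ (θ + 1) * J_a`, where
`J_v = ∫₀¹ (1 - t ^ θ) f'(m v + (m x - m v) t) dt`.
Each `|J_v|` is bounded by the power-mean (Hölder) inequality with weight `1 - t ^ θ`, of total mass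
`θ / (θ + 1)`, together with the (α,m)-convexity bound
`|f'(m v + (m x - m v) t)| ^ q ≤ t ^ α |f'(m x)| ^ q + m (1 - t ^ α) |f'(v)| ^ q`;
integrating this bound against the weight produces the two coefficients of the statement.
-/

theorem IntervalIntegrable.comp_add_mul_sub {f : ℝ → ℝ} {e p : ℝ}
    (hf : IntervalIntegrable f volume e p) :
    IntervalIntegrable (fun t ↦ f (e + (p - e) * t)) volume 0 1 := by
  rcases eq_or_ne p e with rfl | hpe
  · simp
  simpa [div_self (sub_ne_zero.2 hpe)] using (hf.comp_add_left e).comp_mul_left (c := p - e)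

theorem integral_rpow_sub_one_mul_eq_by_parts {f f' : ℝ → ℝ} {e p θ : ℝ} (hθ : 0 < θ)
    (hf : ∀ y ∈ uIcc e p, HasDerivAt f (f' y) y) (hf' : IntervalIntegrable f' volume e p) :
    θ * (∫ t in (0:ℝ)..1, t ^ (θ - 1) * f (e + (p - e) * t)) - f e
      = (p - e) * ∫ t in (0:ℝ)..1, (1 - t ^ θ) * f' (e + (p - e) * t) := by
  have hIoo : Ioo (min (0:ℝ) 1) (max 0 1) = Ioo 0 1 := by simp
  have hseg : ∀ t ∈ Icc (0:ℝ) 1, e + (p - e) * t ∈ uIcc e p := fun t ht ↦ by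
    rw [← segment_eq_uIcc, segment_eq_image']
    exact ⟨t, ht, by simp only [smul_eq_mul, mul_comm]⟩
  have hv : ∀ t ∈ Icc (0:ℝ) 1, HasDerivAt (fun t ↦ f (e + (p - e) * t))
      (f' (e + (p - e) * t) * (p - e)) t := fun t ht ↦
    (hf _ (hseg t ht)).comp t
      (((hasDerivAt_id t).const_mul (p - e)).const_add e |>.congr_deriv (by simp))
  have parts := integral_mul_deriv_eq_deriv_mul_of_hasDerivAt
    (u := fun t ↦ t ^ θ - 1) (u' := fun t ↦ θ * t ^ (θ - 1)) (a := 0) (b := 1)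
    (v := fun t ↦ f (e + (p - e) * t)) (v' := fun t ↦ f' (e + (p - e) * t) * (p - e))
    ((continuous_rpow_const hθ.le).sub continuous_const).continuousOn
    (fun t ht ↦ (hv t (by simpa using ht)).continuousAt.continuousWithinAt)
    (fun t ht ↦ (hasDerivAt_rpow_const (Or.inl (hIoo ▸ ht).1.ne')).sub_const 1)
    (fun t ht ↦ hv t (Ioo_subset_Icc_self (hIoo ▸ ht)))
    ((intervalIntegrable_rpow' (by linarith)).const_mul θ)
    (hf'.comp_add_mul_sub.mul_const _)
  have lhs : ∫ t in (0:ℝ)..1, (t ^ θ - 1) * (f' (e + (p - e) * t) * (p - e))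
      = -((p - e) * ∫ t in (0:ℝ)..1, (1 - t ^ θ) * f' (e + (p - e) * t)) := by
    rw [← intervalIntegral.integral_const_mul, ← intervalIntegral.integral_neg]
    congr 1; ext t; ring
  have rhs : ∫ t in (0:ℝ)..1, θ * t ^ (θ - 1) * f (e + (p - e) * t)
      = θ * ∫ t in (0:ℝ)..1, t ^ (θ - 1) * f (e + (p - e) * t) := by
    rw [← intervalIntegral.integral_const_mul]
    congr 1; ext t; ring
  simp only [lhs, rhs, one_rpow, zero_rpow hθ.ne', sub_self, zero_mul, mul_zero, add_zero,
    zero_sub] at parts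
  linear_combination parts

theorem integral_sub_left_rpow_mul {g : ℝ → ℝ} {c d θ : ℝ} (hθ : 0 < θ) (hcd : c ≤ d) :
    ∫ t in c..d, (t - c) ^ (θ - 1) * g t
      = (d - c) ^ θ * ∫ s in (0:ℝ)..1, s ^ (θ - 1) * g (c + (d - c) * s) := by
  rcases hcd.eq_or_lt with rfl | hlt
  · simp [zero_rpow hθ.ne']
  have hK : 0 < d - c := sub_pos.2 hlt
  have h := smul_integral_comp_add_mul (fun t ↦ (t - c) ^ (θ - 1) * g t) (d - c) c (a := 0) (b := 1)
  simp only [mul_zero, add_zero, mul_one, add_sub_cancel, add_sub_cancel_left, smul_eq_mul] at h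
  rw [← h, ← intervalIntegral.integral_const_mul, ← intervalIntegral.integral_const_mul]
  refine integral_congr fun s hs ↦ ?_
  rw [uIcc_of_le zero_le_one] at hs
  simp only [mul_rpow hK.le hs.1, rpow_sub_one hK.ne']
  field_simp

theorem integral_sub_right_rpow_mul {g : ℝ → ℝ} {c d θ : ℝ} (hθ : 0 < θ) (hcd : c ≤ d) :
    ∫ t in c..d, (d - t) ^ (θ - 1) * g t
      = (d - c) ^ θ * ∫ s in (0:ℝ)..1, s ^ (θ - 1) * g (d + (c - d) * s) := by
  have h := integral_sub_left_rpow_mul (g := fun t ↦ g (-t)) hθ (neg_le_neg hcd)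
  have hneg := integral_comp_neg (a := -d) (b := -c) (fun t ↦ (d - t) ^ (θ - 1) * g t)
  simp only [neg_neg, sub_neg_eq_add] at h hneg
  rw [← hneg]
  convert h using 3 <;> ring_nf

theorem Gamma_mul_rlLeft_sub {f f' : ℝ → ℝ} {c d θ : ℝ} (hθ : 0 < θ) (hcd : c ≤ d)
    (hf : ∀ y ∈ Icc c d, HasDerivAt f (f' y) y) (hf' : IntervalIntegrable f' volume c d) :
    Gamma (θ + 1) * rlLeft θ c d f - (d - c) ^ θ * f c
      = (d - c) ^ (θ + 1) * ∫ t in (0:ℝ)..1, (1 - t ^ θ) * f' (c + (d - c) * t) := by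
  have parts := integral_rpow_sub_one_mul_eq_by_parts hθ (by rwa [uIcc_of_le hcd]) hf'
  rw [rlLeft, integral_sub_left_rpow_mul hθ hcd, Gamma_add_one hθ.ne',
    rpow_add_one' (sub_nonneg.2 hcd) (by linarith)]
  field_simp [(Gamma_pos_of_pos hθ).ne']
  linear_combination (d - c) ^ θ * parts

theorem Gamma_mul_rlRight_sub {f f' : ℝ → ℝ} {c d θ : ℝ} (hθ : 0 < θ) (hcd : c ≤ d)
    (hf : ∀ y ∈ Icc c d, HasDerivAt f (f' y) y) (hf' : IntervalIntegrable f' volume c d) :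
    Gamma (θ + 1) * rlRight θ c d f - (d - c) ^ θ * f d
      = -((d - c) ^ (θ + 1) * ∫ t in (0:ℝ)..1, (1 - t ^ θ) * f' (d + (c - d) * t)) := by
  have parts := integral_rpow_sub_one_mul_eq_by_parts hθ (by rwa [uIcc_of_ge hcd]) hf'.symm
  rw [rlRight, integral_sub_right_rpow_mul hθ hcd, Gamma_add_one hθ.ne',
    rpow_add_one' (sub_nonneg.2 hcd) (by linarith)]
  field_simp [(Gamma_pos_of_pos hθ).ne']
  linear_combination (d - c) ^ θ * parts

theorem trapezoid_defect_eq {f f' : ℝ → ℝ} {m a b x θ : ℝ} (hm : 0 < m) (hθ : 0 < θ)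
    (hx : x ∈ Icc a b) (hf : ∀ y ∈ Icc (m * a) (m * b), HasDerivAt f (f' y) y)
    (hf' : IntervalIntegrable f' volume (m * a) (m * b)) :
    ((x - a) ^ θ * f (m * a) + (b - x) ^ θ * f (m * b)) / (b - a) -
        Gamma (θ + 1) / (m ^ θ * (b - a)) *
          (rlLeft θ (m * a) (m * x) f + rlRight θ (m * x) (m * b) f)
      = m / (b - a) *
          ((b - x) ^ (θ + 1) * (∫ t in (0:ℝ)..1, (1 - t ^ θ) * f' (m * b + (m * x - m * b) * t))
            - (x - a) ^ (θ + 1) *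
              ∫ t in (0:ℝ)..1, (1 - t ^ θ) * f' (m * a + (m * x - m * a) * t)) := by
  have hax : m * a ≤ m * x := mul_le_mul_of_nonneg_left hx.1 hm.le
  have hxb : m * x ≤ m * b := mul_le_mul_of_nonneg_left hx.2 hm.le
  have hmx : m * x ∈ uIcc (m * a) (m * b) := by rw [uIcc_of_le (hax.trans hxb)]; exact ⟨hax, hxb⟩
  have left := Gamma_mul_rlLeft_sub hθ hax (fun y hy ↦ hf y ⟨hy.1, hy.2.trans hxb⟩)
    (hf'.mono_set (uIcc_subset_uIcc left_mem_uIcc hmx))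
  have right := Gamma_mul_rlRight_sub hθ hxb (fun y hy ↦ hf y ⟨hax.trans hy.1, hy.2⟩)
    (hf'.mono_set (uIcc_subset_uIcc hmx right_mem_uIcc))
  have scale : ∀ {u v : ℝ}, u ≤ v → ∀ r : ℝ, (m * v - m * u) ^ r = m ^ r * (v - u) ^ r :=
    fun huv r ↦ by rw [← mul_sub, mul_rpow hm.le (sub_nonneg.2 huv)]
  rw [scale hx.1, scale hx.1, rpow_add_one hm.ne'] at left
  rw [scale hx.2, scale hx.2, rpow_add_one hm.ne'] at right
  have combined : Gamma (θ + 1) * (rlLeft θ (m * a) (m * x) f + rlRight θ (m * x) (m * b) f)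
      = m ^ θ * (((x - a) ^ θ * f (m * a) + (b - x) ^ θ * f (m * b))
        - m * ((b - x) ^ (θ + 1) *
            (∫ t in (0:ℝ)..1, (1 - t ^ θ) * f' (m * b + (m * x - m * b) * t))
          - (x - a) ^ (θ + 1) *
            ∫ t in (0:ℝ)..1, (1 - t ^ θ) * f' (m * a + (m * x - m * a) * t))) := by
    linear_combination left + right
  rw [div_mul_eq_mul_div, combined, mul_div_mul_left _ _ (rpow_pos_of_pos hm θ).ne']
  ring

theorem integral_mul_le_weight_mul_Lp {X : Type*} [MeasurableSpace X] {μ : Measure X}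
    {w g : X → ℝ} {q : ℝ} (hq : 1 ≤ q) (hw : 0 ≤ᵐ[μ] w) (hg : 0 ≤ᵐ[μ] g)
    (hwi : Integrable w μ) (hgm : AEStronglyMeasurable g μ)
    (hwg : Integrable (fun x ↦ w x * g x ^ q) μ) :
    ∫ x, w x * g x ∂μ ≤ (∫ x, w x ∂μ) ^ (1 - q⁻¹) * (∫ x, w x * g x ^ q ∂μ) ^ q⁻¹ := by
  rcases hq.eq_or_lt with rfl | hq1
  · simp
  have hq0 : 0 < q := by linarith
  have hpq : ((1 - q⁻¹)⁻¹).HolderConjugate q := by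
    simpa using HolderConjugate.one_sub_inv_inv (inv_pos.2 hq0) (inv_lt_one_of_one_lt₀ hq1)
  set p := (1 - q⁻¹)⁻¹
  have memLp_of {F : X → ℝ} {r : ℝ} (hr : 0 < r) (hF : 0 ≤ᵐ[μ] F)
      (hFm : AEStronglyMeasurable F μ) (hFr : Integrable (fun x ↦ F x ^ r) μ) :
      MemLp F (ENNReal.ofReal r) μ := by
    rw [← integrable_norm_rpow_iff hFm (by simp [hr]) (by simp), ENNReal.toReal_ofReal hr.le]
    exact hFr.congr (hF.mono fun x hx ↦ by simp only [norm_of_nonneg hx])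
  set F := fun x ↦ w x ^ p⁻¹
  set G := fun x ↦ w x ^ q⁻¹ * g x
  have hF0 : 0 ≤ᵐ[μ] F := hw.mono fun x hx ↦ rpow_nonneg hx _
  have hG0 : 0 ≤ᵐ[μ] G := hw.mp (hg.mono fun x hgx hx ↦ mul_nonneg (rpow_nonneg hx _) hgx)
  have hFp : (fun x ↦ F x ^ p) =ᵐ[μ] w := hw.mono fun x hx ↦ by
    simp only [F, ← rpow_mul hx, inv_mul_cancel₀ hpq.ne_zero, rpow_one]
  have hGq : (fun x ↦ G x ^ q) =ᵐ[μ] fun x ↦ w x * g x ^ q := hw.mp (hg.mono fun x hgx hx ↦ by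
    simp only [G, mul_rpow (rpow_nonneg hx _) hgx, ← rpow_mul hx, inv_mul_cancel₀ hq0.ne',
      rpow_one])
  have hFG : (fun x ↦ F x * G x) =ᵐ[μ] fun x ↦ w x * g x := hw.mono fun x hx ↦ by
    have hsum := hpq.inv_add_inv_eq_one
    simp only [F, G, ← mul_assoc, ← rpow_add' hx (by rw [hsum]; exact one_ne_zero), hsum,
      rpow_one]
  have hFm : AEStronglyMeasurable F μ := (hwi.1.aemeasurable.pow_const _).aestronglyMeasurable
  have hGm : AEStronglyMeasurable G μ :=
    ((hwi.1.aemeasurable.pow_const _).mul hgm.aemeasurable).aestronglyMeasurable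
  have holder := integral_mul_le_Lp_mul_Lq_of_nonneg hpq hF0 hG0
    (memLp_of hpq.pos hF0 hFm (hwi.congr hFp.symm))
    (memLp_of hq0 hG0 hGm (hwg.congr hGq.symm))
  rwa [integral_congr_ae hFG, integral_congr_ae hFp, integral_congr_ae hGq, one_div, one_div,
    inv_inv] at holder

theorem integral_rpow_zero_one {r : ℝ} (hr : -1 < r) : ∫ t in (0:ℝ)..1, t ^ r = 1 / (r + 1) := by
  rw [integral_rpow (Or.inl hr), one_rpow, zero_rpow (by linarith)]
  simp

theorem integral_one_sub_rpow {θ : ℝ} (hθ : -1 < θ) :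
    ∫ t in (0:ℝ)..1, (1 - t ^ θ) = θ / (θ + 1) := by
  rw [intervalIntegral.integral_sub intervalIntegrable_const (intervalIntegrable_rpow' hθ),
    integral_rpow_zero_one hθ, intervalIntegral.integral_const, sub_zero, smul_eq_mul, mul_one]
  field_simp [(by linarith : θ + 1 ≠ 0)]
  ring

theorem integral_one_sub_rpow_mul_alphaM_bound {θ α m A B : ℝ} (hθ : 0 ≤ θ) (hα : 0 ≤ α) :
    ∫ t in (0:ℝ)..1, (1 - t ^ θ) * (t ^ α * A + m * (1 - t ^ α) * B)
      = A * (θ / ((α + 1) * (α + θ + 1)))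
        + m * B * (θ * α * (α + θ + 2) / ((θ + 1) * (α + 1) * (α + θ + 1))) := by
  have hexp : ∀ t ∈ uIcc (0:ℝ) 1, (1 - t ^ θ) * (t ^ α * A + m * (1 - t ^ α) * B)
      = (A - m * B) * t ^ α - (A - m * B) * t ^ (α + θ) + m * B * (1 - t ^ θ) := by
    intro t ht
    rw [uIcc_of_le zero_le_one] at ht
    rw [rpow_add_of_nonneg ht.1 hα hθ]
    ring
  have iα := intervalIntegrable_rpow' (a := 0) (b := 1) (by linarith : -1 < α)
  have iαθ := intervalIntegrable_rpow' (a := 0) (b := 1) (by linarith : -1 < α + θ)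
  have iθ := intervalIntegrable_rpow' (a := 0) (b := 1) (by linarith : -1 < θ)
  rw [integral_congr hexp, intervalIntegral.integral_add ((iα.const_mul _).sub (iαθ.const_mul _))
      ((intervalIntegrable_const.sub iθ).const_mul _),
    intervalIntegral.integral_sub (iα.const_mul _) (iαθ.const_mul _),
    intervalIntegral.integral_const_mul, intervalIntegral.integral_const_mul,
    intervalIntegral.integral_const_mul, integral_rpow_zero_one (by linarith),
    integral_rpow_zero_one (by linarith), integral_one_sub_rpow (by linarith)]
  field_simp
  ring

theorem abs_integral_one_sub_rpow_mul_le {g h : ℝ → ℝ} {θ q : ℝ} (hθ : 0 ≤ θ) (hq : 1 ≤ q)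
    (hg : IntervalIntegrable g volume 0 1) (hh : IntervalIntegrable h volume 0 1)
    (hgh : ∀ t ∈ Icc (0:ℝ) 1, |g t| ^ q ≤ h t) :
    |∫ t in (0:ℝ)..1, (1 - t ^ θ) * g t|
      ≤ (θ / (θ + 1)) ^ (1 - 1 / q) * (∫ t in (0:ℝ)..1, (1 - t ^ θ) * h t) ^ (1 / q) := by
  set μ := volume.restrict (Ioc (0:ℝ) 1)
  have hw_cont : Continuous fun t : ℝ ↦ 1 - t ^ θ :=
    continuous_const.sub (continuous_rpow_const hθ)
  have hw01 : ∀ t ∈ Icc (0:ℝ) 1, 0 ≤ 1 - t ^ θ := fun t ht ↦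
    sub_nonneg.2 (rpow_le_one ht.1 ht.2 hθ)
  have hIcc : ∀ᵐ t ∂μ, t ∈ Icc (0:ℝ) 1 :=
    (ae_restrict_mem measurableSet_Ioc).mono fun t ht ↦ Ioc_subset_Icc_self ht
  have hw : 0 ≤ᵐ[μ] fun t ↦ 1 - t ^ θ := hIcc.mono hw01
  have hwi : Integrable (fun t : ℝ ↦ 1 - t ^ θ) μ := (hw_cont.intervalIntegrable 0 1).1
  have hwh : Integrable (fun t ↦ (1 - t ^ θ) * h t) μ :=
    (hh.continuousOn_mul hw_cont.continuousOn).1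
  have hwgh : ∀ᵐ t ∂μ, (1 - t ^ θ) * |g t| ^ q ≤ (1 - t ^ θ) * h t :=
    hIcc.mono fun t ht ↦ mul_le_mul_of_nonneg_left (hgh t ht) (hw01 t ht)
  have hgm : AEStronglyMeasurable (fun t ↦ |g t|) μ :=
    continuous_abs.comp_aestronglyMeasurable hg.1.aestronglyMeasurable
  have hwg : Integrable (fun t ↦ (1 - t ^ θ) * |g t| ^ q) μ := by
    refine hwh.mono' (hw_cont.aestronglyMeasurable.mul
      (hgm.aemeasurable.pow_const q).aestronglyMeasurable) ?_
    filter_upwards [hIcc, hwgh] with t ht hle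
    rwa [norm_of_nonneg (mul_nonneg (hw01 t ht) (rpow_nonneg (abs_nonneg _) q))]
  calc |∫ t in (0:ℝ)..1, (1 - t ^ θ) * g t|
      ≤ ∫ t in (0:ℝ)..1, (1 - t ^ θ) * |g t| := by
        refine (abs_integral_le_integral_abs zero_le_one).trans_eq (integral_congr fun t ht ↦ ?_)
        rw [uIcc_of_le zero_le_one] at ht
        simp only [abs_mul, abs_of_nonneg (hw01 t ht)]
    _ ≤ (∫ t in (0:ℝ)..1, (1 - t ^ θ)) ^ (1 - q⁻¹)
          * (∫ t in (0:ℝ)..1, (1 - t ^ θ) * |g t| ^ q) ^ q⁻¹ := by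
        simp only [integral_of_le zero_le_one]
        exact integral_mul_le_weight_mul_Lp hq hw (ae_of_all _ fun t ↦ abs_nonneg _) hwi hgm hwg
    _ ≤ (θ / (θ + 1)) ^ (1 - 1 / q) * (∫ t in (0:ℝ)..1, (1 - t ^ θ) * h t) ^ (1 / q) := by
        rw [integral_one_sub_rpow (by linarith), ← one_div]
        gcongr
        all_goals simp only [integral_of_le zero_le_one]
        · exact integral_nonneg_of_ae
            (hw.mono fun t ht ↦ mul_nonneg ht (rpow_nonneg (abs_nonneg _) q))
        · exact integral_mono_ae hwg hwh hwgh

theorem abs_integral_one_sub_rpow_mul_le_of_alphaM {g : ℝ → ℝ} {θ α q m A B : ℝ} (hθ : 0 ≤ θ)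
    (hα : 0 ≤ α) (hq : 1 ≤ q) (hg : IntervalIntegrable g volume 0 1)
    (hgAB : ∀ t ∈ Icc (0:ℝ) 1, |g t| ^ q ≤ t ^ α * A + m * (1 - t ^ α) * B) :
    |∫ t in (0:ℝ)..1, (1 - t ^ θ) * g t|
      ≤ (θ / (θ + 1)) ^ (1 - 1 / q) * (A * (θ / ((α + 1) * (α + θ + 1)))
        + m * B * (θ * α * (α + θ + 2) / ((θ + 1) * (α + 1) * (α + θ + 1)))) ^ (1 / q) := by
  have hAB : Continuous fun t : ℝ ↦ t ^ α * A + m * (1 - t ^ α) * B := by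
    have := continuous_rpow_const hα
    fun_prop
  rw [← integral_one_sub_rpow_mul_alphaM_bound hθ hα]
  exact abs_integral_one_sub_rpow_mul_le hθ hq hg (hAB.intervalIntegrable 0 1) hgAB

theorem AlphaMConvexOn.apply_segment_le {α m a b x v t : ℝ} {g : ℝ → ℝ}
    (hg : AlphaMConvexOn α m (m * a) b g) (hm : m ∈ Ioc (0:ℝ) 1) (ha : 0 ≤ a)
    (hx : x ∈ Icc a b) (hv : v ∈ Icc a b) (ht : t ∈ Icc (0:ℝ) 1) :
    g (m * v + (m * x - m * v) * t) ≤ t ^ α * g (m * x) + m * (1 - t ^ α) * g v := by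
  obtain ⟨hm0, hm1⟩ := hm
  have hmb : m * b ≤ b := mul_le_of_le_one_left (ha.trans (hx.1.trans hx.2)) hm1
  have hmem : ∀ y ∈ Icc a b, m * y ∈ Icc (m * a) b := fun y hy ↦
    ⟨mul_le_mul_of_nonneg_left hy.1 hm0.le, (mul_le_mul_of_nonneg_left hy.2 hm0.le).trans hmb⟩
  have hcomb : t * x + (1 - t) * v ∈ Icc a b :=
    convex_Icc a b hx hv ht.1 (sub_nonneg.2 ht.2) (by ring)
  have := hg (m * x) (hmem x hx) v ⟨(mul_le_of_le_one_left ha hm1).trans hv.1, hv.2⟩ t ht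
    (by convert hmem _ hcomb using 1; ring)
  convert this using 2
  ring

theorem trapezoid_powmean
    (I : Set ℝ) (hI : Set.OrdConnected I) (hI0 : I ⊆ Set.Ici (0:ℝ)) (f f' : ℝ → ℝ) (m a b : ℝ)
    (hm : m ∈ Set.Ioc (0:ℝ) 1) (hab : a < b)
    (hma : m * a ∈ interior I) (hb : b ∈ interior I)
    (hf : ∀ y ∈ interior I, HasDerivAt f (f' y) y)
    (hint : IntervalIntegrable f' MeasureTheory.volume (m * a) (m * b))
    (α q : ℝ) (hα : α ∈ Set.Icc (0:ℝ) 1) (hq : 1 ≤ q)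
    (hconv : AlphaMConvexOn α m (m * a) b (fun u => |f' u| ^ q)) :
    ∀ x ∈ Set.Icc a b, ∀ θ : ℝ, 0 < θ →
      |((x - a) ^ θ * f (m * a) + (b - x) ^ θ * f (m * b)) / (b - a) -
          Real.Gamma (θ + 1) / (m ^ θ * (b - a)) *
            (rlLeft θ (m * a) (m * x) f + rlRight θ (m * x) (m * b) f)| ≤
        m / (b - a) * (θ / (θ + 1)) ^ (1 - 1 / q) *
          ((x - a) ^ (θ + 1) *
              (|f' (m * x)| ^ q * (θ / ((α + 1) * (α + θ + 1))) +
                m * |f' a| ^ q *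
                  (θ * α * (α + θ + 2) / ((θ + 1) * (α + 1) * (α + θ + 1)))) ^ (1 / q) +
            (b - x) ^ (θ + 1) *
              (|f' (m * x)| ^ q * (θ / ((α + 1) * (α + θ + 1))) +
                m * |f' b| ^ q *
                  (θ * α * (α + θ + 2) / ((θ + 1) * (α + 1) * (α + θ + 1)))) ^ (1 / q)) := by
  intro x hx θ hθ
  have ha : 0 ≤ a := nonneg_of_mul_nonneg_right (hI0 (interior_subset hma)) hm.1
  have hmab : m * a ≤ m * b := mul_le_mul_of_nonneg_left hab.le hm.1.le
  have hmbb : m * b ≤ b := mul_le_of_le_one_left (ha.trans hab.le) hm.2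
  have hsub : Icc (m * a) (m * b) ⊆ interior I :=
    hI.interior.out hma (hI.interior.out hma hb ⟨hmab, hmbb⟩)
  have hmem : ∀ y ∈ Icc a b, m * y ∈ uIcc (m * a) (m * b) := fun y hy ↦ by
    rw [uIcc_of_le hmab]
    exact ⟨mul_le_mul_of_nonneg_left hy.1 hm.1.le, mul_le_mul_of_nonneg_left hy.2 hm.1.le⟩
  have bound : ∀ v ∈ Icc a b, |∫ t in (0:ℝ)..1, (1 - t ^ θ) * f' (m * v + (m * x - m * v) * t)|
      ≤ (θ / (θ + 1)) ^ (1 - 1 / q) * (|f' (m * x)| ^ q * (θ / ((α + 1) * (α + θ + 1)))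
        + m * |f' v| ^ q * (θ * α * (α + θ + 2) / ((θ + 1) * (α + 1) * (α + θ + 1)))) ^ (1 / q) :=
    fun v hv ↦ abs_integral_one_sub_rpow_mul_le_of_alphaM hθ.le hα.1 hq
      (hint.mono_set (uIcc_subset_uIcc (hmem v hv) (hmem x hx))).comp_add_mul_sub
      (fun t ht ↦ hconv.apply_segment_le hm ha hx hv ht)
  have hxa : 0 ≤ (x - a) ^ (θ + 1) := rpow_nonneg (sub_nonneg.2 hx.1) _
  have hbx : 0 ≤ (b - x) ^ (θ + 1) := rpow_nonneg (sub_nonneg.2 hx.2) _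
  have hmba : 0 ≤ m / (b - a) := div_nonneg hm.1.le (sub_nonneg.2 hab.le)
  rw [trapezoid_defect_eq hm.1 hθ hx (fun y hy ↦ hf y (hsub hy)) hint, abs_mul, abs_of_nonneg hmba]
  grw [abs_sub, abs_mul, abs_mul, abs_of_nonneg hxa, abs_of_nonneg hbx, bound a ⟨le_rfl, hab.le⟩,
    bound b ⟨hab.le, le_rfl⟩]
  exact le_of_eq (by ring)
end

section
/- Let f : I ⊂ [0,∞) → ℝ be differentiable on I°, m ∈ (0,1], ma, b ∈ I° with a < b, and suppose f' is integrable on [ma, mb]. If |f'|^q is (α,m)-convex on [ma,b] for some fixed q > 1 and (α,m) ∈ [0,1]², then for every x ∈ [a,b], λ ∈ [0,1] and θ > 0, with p = q/(q−1): |S_f(mx,λ,θ,ma,mb)| ≤ (m^θ A₄(θ,λ,p)^{1/p}/(b−a)) { (x−a)^{θ+1} ((|f'(mx)|^q + αm |f'(a)|^q)/(α+1))^{1/q} + (b−x)^{θ+1} ((|f'(mx)|^q + αm |f'(b)|^q)/(α+1))^{1/q} }, where A₄(θ,λ,p) = ∫₀¹ |t^θ − λ|^p dt. -/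
open MeasureTheory Set intervalIntegral Real

/-!
Substituting `s = t * (m * x) + (1 - t) * (m * v)` for `v = a, b` turns both fractional integrals
into integrals over `[0, 1]`; integrating `(t ^ θ - λ) f'(s)` by parts there writes `S_f` as
`m ^ θ / (b - a) * ((x - a) ^ (θ + 1) T_a - (b - x) ^ (θ + 1) T_b)` with
`T_v = ∫₀¹ (t ^ θ - λ) f'(s) dt`. Hölder's inequality bounds `|T_v|` by the `L^p` norm of
`t ^ θ - λ` times the `L^q` norm of `f'(s)`, and `(α, m)`-convexity bounds `|f'(s)|^q` by
`t ^ α |f'(m x)|^q + m (1 - t ^ α) |f'(v)|^q`, whose integral is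
`(|f'(m x)|^q + α m |f'(v)|^q) / (α + 1)`.
-/

lemma mul_add_one_sub_mul_mem_uIcc {E X t : ℝ} (ht : t ∈ Icc (0:ℝ) 1) :
    t * X + (1 - t) * E ∈ uIcc E X := by
  rw [← segment_eq_uIcc]
  exact ⟨1 - t, t, sub_nonneg.2 ht.2, ht.1, sub_add_cancel 1 t,
    by simp only [smul_eq_mul]; ring⟩

lemma IntervalIntegrable.comp_segment_s10 {F : ℝ → ℝ} {E X : ℝ}
    (hF : IntervalIntegrable F volume E X) :
    IntervalIntegrable (fun t => F (t * X + (1 - t) * E)) volume 0 1 := by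
  have hφ (t : ℝ) : t * X + (1 - t) * E = (X - E) * t + E := by ring
  simp_rw [hφ]
  rcases eq_or_ne X E with rfl | hXE
  · simp
  · simpa [sub_ne_zero.2 hXE] using (hF.comp_add_right E).comp_mul_left (c := X - E)

lemma integral_sub_const_rpow_mul {F : ℝ → ℝ} {E X θ : ℝ} (hθ : θ ≠ 0) (hEX : E ≤ X) :
    ∫ s in E..X, (s - E) ^ (θ - 1) * F s =
      (X - E) ^ θ * ∫ t in (0:ℝ)..1, t ^ (θ - 1) * F (t * X + (1 - t) * E) := by
  have h := smul_integral_comp_mul_add (a := 0) (b := 1)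
    (fun s => (s - E) ^ (θ - 1) * F s) (X - E) E
  simp only [mul_zero, zero_add, mul_one, sub_add_cancel, smul_eq_mul] at h
  rw [← h, show (X - E) ^ θ = (X - E) * (X - E) ^ (θ - 1) by
    rw [← rpow_one_add' (sub_nonneg.2 hEX) (by rwa [add_sub_cancel])]; ring_nf, mul_assoc]
  congr 1
  rw [← intervalIntegral.integral_const_mul]
  refine integral_congr fun t ht => ?_
  rw [uIcc_of_le zero_le_one] at ht
  rw [show (X - E) * t + E = t * X + (1 - t) * E by ring,
    show t * X + (1 - t) * E - E = (X - E) * t by ring, mul_rpow (sub_nonneg.2 hEX) ht.1]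
  ring

lemma integral_const_sub_rpow_mul {F : ℝ → ℝ} {E X θ : ℝ} (hθ : θ ≠ 0) (hXE : X ≤ E) :
    ∫ s in X..E, (E - s) ^ (θ - 1) * F s =
      (E - X) ^ θ * ∫ t in (0:ℝ)..1, t ^ (θ - 1) * F (t * X + (1 - t) * E) := by
  have h := smul_integral_comp_mul_add (a := 0) (b := 1)
    (fun s => (E - s) ^ (θ - 1) * F s) (X - E) E
  simp only [mul_zero, zero_add, mul_one, sub_add_cancel, smul_eq_mul] at h
  rw [integral_symm, ← h, show (E - X) ^ θ = (E - X) * (E - X) ^ (θ - 1) by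
    rw [← rpow_one_add' (sub_nonneg.2 hXE) (by rwa [add_sub_cancel])]; ring_nf,
    ← neg_mul, neg_sub, mul_assoc]
  congr 1
  rw [← intervalIntegral.integral_const_mul]
  refine integral_congr fun t ht => ?_
  rw [uIcc_of_le zero_le_one] at ht
  rw [show (X - E) * t + E = t * X + (1 - t) * E by ring,
    show E - (t * X + (1 - t) * E) = (E - X) * t by ring, mul_rpow (sub_nonneg.2 hXE) ht.1]
  ring

lemma integral_rpow_sub_mul_deriv_comp_segment {F F' : ℝ → ℝ} {E X θ : ℝ} (lam : ℝ)
    (hθ : 0 < θ)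
    (hF : ∀ y ∈ uIcc E X, HasDerivAt F (F' y) y) (hF' : IntervalIntegrable F' volume E X) :
    (X - E) * ∫ t in (0:ℝ)..1, (t ^ θ - lam) * F' (t * X + (1 - t) * E) =
      (1 - lam) * F X + lam * F E -
        θ * ∫ t in (0:ℝ)..1, t ^ (θ - 1) * F (t * X + (1 - t) * E) := by
  have hFφ : ∀ t ∈ Icc (0:ℝ) 1,
      HasDerivAt (fun t => F (t * X + (1 - t) * E)) ((X - E) * F' (t * X + (1 - t) * E)) t := by
    intro t ht
    have hφ : HasDerivAt (fun t : ℝ => t * X + (1 - t) * E) (X - E) t := by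
      have h := ((hasDerivAt_id t).mul_const (X - E)).add_const E
      simp only [id, one_mul] at h
      exact h.congr_of_eventuallyEq (.of_forall fun s => by ring)
    rw [mul_comm]
    exact (hF _ (mul_add_one_sub_mul_mem_uIcc ht)).comp t hφ
  have ibp := integral_mul_deriv_eq_deriv_mul_of_hasDerivAt (a := 0) (b := 1)
    (u := fun t => t ^ θ - lam) (u' := fun t => θ * t ^ (θ - 1))
    ((continuous_rpow_const hθ.le).sub continuous_const).continuousOn
    (fun t ht => (hFφ t (by rwa [uIcc_of_le zero_le_one] at ht)).continuousAt.continuousWithinAt)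
    (fun t ht => by
      simp only [zero_le_one, min_eq_left, max_eq_right] at ht
      exact (hasDerivAt_rpow_const (Or.inl ht.1.ne')).sub_const lam)
    (fun t ht => by
      simp only [zero_le_one, min_eq_left, max_eq_right] at ht
      exact hFφ t (Ioo_subset_Icc_self ht))
    ((intervalIntegrable_rpow' (by linarith)).const_mul θ)
    (hF'.comp_segment_s10.const_mul (X - E))
  simp only [one_rpow, zero_rpow hθ.ne', one_mul, zero_mul, sub_self, add_zero, zero_add,
    sub_zero, mul_assoc] at ibp
  rw [← intervalIntegral.integral_const_mul, ← intervalIntegral.integral_const_mul]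
  simp only [mul_left_comm (X - E)] at ibp ⊢
  rw [ibp]
  ring

lemma Sf_eq {f f' : ℝ → ℝ} {m a b x θ : ℝ} (lam : ℝ) (hm : 0 < m) (hθ : 0 < θ)
    (hab : a < b) (hax : a ≤ x) (hxb : x ≤ b)
    (hf : ∀ y ∈ Icc (m * a) (m * b), HasDerivAt f (f' y) y)
    (hf' : IntervalIntegrable f' volume (m * a) (m * b)) :
    Sf f m a b x lam θ = m ^ θ / (b - a) *
      ((x - a) ^ (θ + 1) *
          (∫ t in (0:ℝ)..1, (t ^ θ - lam) * f' (t * (m * x) + (1 - t) * (m * a))) -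
        (b - x) ^ (θ + 1) *
          ∫ t in (0:ℝ)..1, (t ^ θ - lam) * f' (t * (m * x) + (1 - t) * (m * b))) := by
  have hax' : m * a ≤ m * x := mul_le_mul_of_nonneg_left hax hm.le
  have hxb' : m * x ≤ m * b := mul_le_mul_of_nonneg_left hxb hm.le
  have hleft : uIcc (m * a) (m * x) ⊆ Icc (m * a) (m * b) := by
    rw [uIcc_of_le hax']; exact Icc_subset_Icc_right hxb'
  have hright : uIcc (m * b) (m * x) ⊆ Icc (m * a) (m * b) := by
    rw [uIcc_of_ge hxb']; exact Icc_subset_Icc_left hax'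
  have hIcc : uIcc (m * a) (m * b) = Icc (m * a) (m * b) := uIcc_of_le (hax'.trans hxb')
  have ibp₁ := integral_rpow_sub_mul_deriv_comp_segment lam hθ (fun y hy => hf y (hleft hy))
    (hf'.mono_set (hIcc ▸ hleft))
  have ibp₂ := integral_rpow_sub_mul_deriv_comp_segment lam hθ (fun y hy => hf y (hright hy))
    (hf'.mono_set (hIcc ▸ hright))
  rw [Sf, rlLeft, rlRight, integral_sub_const_rpow_mul hθ.ne' hax',
    integral_const_sub_rpow_mul hθ.ne' hxb']
  generalize ∫ t in (0:ℝ)..1, (t ^ θ - lam) * f' (t * (m * x) + (1 - t) * (m * a)) = T₁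
    at ibp₁ ⊢
  generalize ∫ t in (0:ℝ)..1, (t ^ θ - lam) * f' (t * (m * x) + (1 - t) * (m * b)) = T₂
    at ibp₂ ⊢
  generalize ∫ t in (0:ℝ)..1, t ^ (θ - 1) * f (t * (m * x) + (1 - t) * (m * a)) = I₁
    at ibp₁ ⊢
  generalize ∫ t in (0:ℝ)..1, t ^ (θ - 1) * f (t * (m * x) + (1 - t) * (m * b)) = I₂
    at ibp₂ ⊢
  rw [Gamma_add_one hθ.ne', rpow_sub_one hm.ne', ← mul_sub, ← mul_sub,
    mul_rpow hm.le (sub_nonneg.2 hax), mul_rpow hm.le (sub_nonneg.2 hxb),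
    rpow_add' (sub_nonneg.2 hax) (by linarith), rpow_add' (sub_nonneg.2 hxb) (by linarith),
    rpow_one, rpow_one]
  have hG := (Gamma_pos_of_pos hθ).ne'
  have hba : b - a ≠ 0 := (sub_pos.2 hab).ne'
  field_simp
  linear_combination -(x - a) ^ θ * ibp₁ - (b - x) ^ θ * ibp₂

lemma abs_Sf_le {f f' : ℝ → ℝ} {m a b x θ B₁ B₂ : ℝ} (lam : ℝ) (hm : 0 < m)
    (hθ : 0 < θ) (hab : a < b) (hax : a ≤ x) (hxb : x ≤ b)
    (hf : ∀ y ∈ Icc (m * a) (m * b), HasDerivAt f (f' y) y)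
    (hf' : IntervalIntegrable f' volume (m * a) (m * b))
    (h₁ : |∫ t in (0:ℝ)..1, (t ^ θ - lam) * f' (t * (m * x) + (1 - t) * (m * a))| ≤ B₁)
    (h₂ : |∫ t in (0:ℝ)..1, (t ^ θ - lam) * f' (t * (m * x) + (1 - t) * (m * b))| ≤ B₂) :
    |Sf f m a b x lam θ| ≤
      m ^ θ / (b - a) * ((x - a) ^ (θ + 1) * B₁ + (b - x) ^ (θ + 1) * B₂) := by
  have hc : 0 ≤ m ^ θ / (b - a) := div_nonneg (rpow_nonneg hm.le θ) (sub_pos.2 hab).le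
  have hxa := rpow_nonneg (sub_nonneg.2 hax) (θ + 1)
  have hbx := rpow_nonneg (sub_nonneg.2 hxb) (θ + 1)
  rw [Sf_eq lam hm hθ hab hax hxb hf hf', abs_mul, abs_of_nonneg hc]
  generalize ∫ t in (0:ℝ)..1, (t ^ θ - lam) * f' (t * (m * x) + (1 - t) * (m * a)) = T₁
    at h₁ ⊢
  generalize ∫ t in (0:ℝ)..1, (t ^ θ - lam) * f' (t * (m * x) + (1 - t) * (m * b)) = T₂
    at h₂ ⊢
  gcongr
  calc |(x - a) ^ (θ + 1) * T₁ - (b - x) ^ (θ + 1) * T₂|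
      ≤ (x - a) ^ (θ + 1) * |T₁| + (b - x) ^ (θ + 1) * |T₂| :=
        (abs_sub _ _).trans_eq (by rw [abs_mul, abs_mul, abs_of_nonneg hxa, abs_of_nonneg hbx])
    _ ≤ (x - a) ^ (θ + 1) * B₁ + (b - x) ^ (θ + 1) * B₂ := by gcongr

lemma abs_intervalIntegral_mul_le_Lp_mul_Lq {a b p q : ℝ} {u g : ℝ → ℝ} (hab : a ≤ b)
    (hpq : p.HolderConjugate q) (hu : MemLp u (ENNReal.ofReal p) (volume.restrict (Ioc a b)))
    (hg : MemLp g (ENNReal.ofReal q) (volume.restrict (Ioc a b))) :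
    |∫ t in a..b, u t * g t| ≤
      (∫ t in a..b, |u t| ^ p) ^ (1 / p) * (∫ t in a..b, |g t| ^ q) ^ (1 / q) := by
  simp only [integral_of_le hab, ← norm_eq_abs]
  calc ‖∫ t in Ioc a b, u t * g t‖ ≤ ∫ t in Ioc a b, ‖u t‖ * ‖g t‖ := by
        simpa only [norm_mul] using
          MeasureTheory.norm_integral_le_integral_norm (fun t => u t * g t)
    _ ≤ _ := integral_mul_norm_le_Lp_mul_Lq hpq hu hg

lemma abs_intervalIntegral_mul_le_of_rpow_le {a b p q : ℝ} {u g h : ℝ → ℝ} (hab : a ≤ b)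
    (hpq : p.HolderConjugate q) (hu : MemLp u (ENNReal.ofReal p) (volume.restrict (Ioc a b)))
    (hg : AEStronglyMeasurable g (volume.restrict (Ioc a b)))
    (hh : IntervalIntegrable h volume a b) (hgh : ∀ t ∈ Icc a b, |g t| ^ q ≤ h t) :
    |∫ t in a..b, u t * g t| ≤
      (∫ t in a..b, |u t| ^ p) ^ (1 / p) * (∫ t in a..b, h t) ^ (1 / q) := by
  have hgq : IntervalIntegrable (fun t => |g t| ^ q) volume a b := by
    refine (intervalIntegrable_iff_integrableOn_Ioc_of_le hab).2 (hh.1.mono' ?_ ?_)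
    · exact (hg.norm.aemeasurable.pow_const q).aestronglyMeasurable
    · refine ae_restrict_of_forall_mem measurableSet_Ioc fun t ht => ?_
      rw [norm_of_nonneg (by positivity)]
      exact hgh t (Ioc_subset_Icc_self ht)
  have hgLq : MemLp g (ENNReal.ofReal q) (volume.restrict (Ioc a b)) := by
    refine (integrable_norm_rpow_iff hg (by simpa using hpq.symm.pos) ENNReal.ofReal_ne_top).1 ?_
    simp only [ENNReal.toReal_ofReal hpq.symm.nonneg, norm_eq_abs]
    exact hgq.1
  calc |∫ t in a..b, u t * g t|
      ≤ (∫ t in a..b, |u t| ^ p) ^ (1 / p) * (∫ t in a..b, |g t| ^ q) ^ (1 / q) :=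
        abs_intervalIntegral_mul_le_Lp_mul_Lq hab hpq hu hgLq
    _ ≤ (∫ t in a..b, |u t| ^ p) ^ (1 / p) * (∫ t in a..b, h t) ^ (1 / q) := by
        gcongr
        · exact rpow_nonneg (integral_nonneg hab fun t _ => by positivity) _
        · exact integral_nonneg hab fun t _ => by positivity
        · exact one_div_nonneg.2 hpq.symm.nonneg
        · exact integral_mono_on hab hgq hh hgh

lemma integral_rpow_mul_add_mul_one_sub_rpow {α m A B : ℝ} (hα : -1 < α) :
    ∫ t in (0:ℝ)..1, (t ^ α * A + m * (1 - t ^ α) * B) = (A + α * m * B) / (α + 1) := by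
  have hα' : α + 1 ≠ 0 := by linarith
  have h (t : ℝ) : t ^ α * A + m * (1 - t ^ α) * B = (A - m * B) * t ^ α + m * B := by ring
  simp_rw [h]
  rw [integral_add ((intervalIntegrable_rpow' hα).const_mul _) intervalIntegrable_const,
    intervalIntegral.integral_const_mul, integral_rpow (Or.inl hα)]
  field_simp
  simp [zero_rpow hα']
  ring

lemma ContinuousOn.memLp_restrict_Ioc {u : ℝ → ℝ} {a b : ℝ} (hu : ContinuousOn u (Icc a b))
    (p : ENNReal) : MemLp u p (volume.restrict (Ioc a b)) := by
  obtain ⟨C, hC⟩ := isCompact_Icc.exists_bound_of_continuousOn hu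
  exact .of_bound ((hu.mono Ioc_subset_Icc_self).aestronglyMeasurable measurableSet_Ioc) C
    (ae_restrict_of_forall_mem measurableSet_Ioc fun t ht => hC t (Ioc_subset_Icc_self ht))

lemma AlphaMConvexOn.le_of_mem {α m c d u v t : ℝ} {g : ℝ → ℝ}
    (hg : AlphaMConvexOn α m c d g)
    (hu : u ∈ Icc c d) (hv : v ∈ Icc c d) (hmv : m * v ∈ Icc c d) (ht : t ∈ Icc (0:ℝ) 1) :
    g (t * u + (1 - t) * (m * v)) ≤ t ^ α * g u + m * (1 - t ^ α) * g v := by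
  have hmem : t * u + (1 - t) * (m * v) ∈ Icc c d :=
    convex_Icc c d hu hmv ht.1 (sub_nonneg.2 ht.2) (by ring)
  rw [show t * u + (1 - t) * (m * v) = t * u + m * (1 - t) * v by ring] at hmem ⊢
  exact hg u hu v hv t ht hmem

lemma AlphaMConvexOn.abs_integral_rpow_sub_mul_le {g : ℝ → ℝ} {α m c d u v θ lam p q : ℝ}
    (hconv : AlphaMConvexOn α m c d (fun y => |g y| ^ q)) (hpq : p.HolderConjugate q)
    (hα : 0 ≤ α) (hθ : 0 ≤ θ) (hu : u ∈ Icc c d) (hv : v ∈ Icc c d)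
    (hmv : m * v ∈ Icc c d)
    (hg : IntervalIntegrable g volume (m * v) u) :
    |∫ t in (0:ℝ)..1, (t ^ θ - lam) * g (t * u + (1 - t) * (m * v))| ≤
      (∫ t in (0:ℝ)..1, |t ^ θ - lam| ^ p) ^ (1 / p) *
        ((|g u| ^ q + α * m * |g v| ^ q) / (α + 1)) ^ (1 / q) := by
  have hpow : IntervalIntegrable (fun t : ℝ => t ^ α) volume 0 1 :=
    intervalIntegrable_rpow' (by linarith)
  rw [← integral_rpow_mul_add_mul_one_sub_rpow (m := m) (by linarith)]
  exact abs_intervalIntegral_mul_le_of_rpow_le zero_le_one hpq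
    (((continuous_rpow_const hθ).sub continuous_const).continuousOn.memLp_restrict_Ioc _)
    hg.comp_segment_s10.1.aestronglyMeasurable
    ((hpow.mul_const _).add (((intervalIntegrable_const.sub hpow).const_mul m).mul_const _))
    fun t ht => hconv.le_of_mem hu hv hmv ht

theorem holder_ineq
    (I : Set ℝ) (hI : Set.OrdConnected I) (hI0 : I ⊆ Set.Ici (0:ℝ)) (f f' : ℝ → ℝ) (m a b : ℝ)
    (hm : m ∈ Set.Ioc (0:ℝ) 1) (hab : a < b)
    (hma : m * a ∈ interior I) (hb : b ∈ interior I)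
    (hf : ∀ y ∈ interior I, HasDerivAt f (f' y) y)
    (hint : IntervalIntegrable f' MeasureTheory.volume (m * a) (m * b))
    (α q : ℝ) (hα : α ∈ Set.Icc (0:ℝ) 1) (hq : 1 < q)
    (hconv : AlphaMConvexOn α m (m * a) b (fun u => |f' u| ^ q)) :
    ∀ x ∈ Set.Icc a b, ∀ lam ∈ Set.Icc (0:ℝ) 1, ∀ θ : ℝ, 0 < θ →
      |Sf f m a b x lam θ| ≤
        m ^ θ * (∫ t in (0:ℝ)..1, |t ^ θ - lam| ^ (q / (q - 1))) ^ (1 / (q / (q - 1))) /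
            (b - a) *
          ((x - a) ^ (θ + 1) *
              ((|f' (m * x)| ^ q + α * m * |f' a| ^ q) / (α + 1)) ^ (1 / q) +
            (b - x) ^ (θ + 1) *
              ((|f' (m * x)| ^ q + α * m * |f' b| ^ q) / (α + 1)) ^ (1 / q)) := by
  intro x ⟨hax, hxb⟩ lam _ θ hθ
  obtain ⟨hm0, hm1⟩ := hm
  have hpq : (q / (q - 1)).HolderConjugate q := (HolderConjugate.conjExponent hq).symm
  have hma0 : 0 ≤ m * a := hI0 (interior_subset hma)
  have ha0 : 0 ≤ a := (mul_nonneg_iff_of_pos_left hm0).1 hma0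
  have hmem {y : ℝ} (hay : a ≤ y) (hyb : y ≤ b) : m * y ∈ Icc (m * a) b :=
    ⟨by gcongr, (mul_le_of_le_one_left (ha0.trans hay) hm1).trans hyb⟩
  have hmaa : m * a ≤ a := mul_le_of_le_one_left ha0 hm1
  have hmb : m * b ≤ b := (hmem hab.le le_rfl).2
  have hderiv : ∀ y ∈ Icc (m * a) (m * b), HasDerivAt f (f' y) y := fun y hy =>
    hf y (hI.interior.out hma hb ⟨hy.1, hy.2.trans hmb⟩)
  have hmx : m * x ∈ uIcc (m * a) (m * b) := by
    rw [uIcc_of_le (by gcongr)]; exact ⟨by gcongr, by gcongr⟩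
  have hT₁ := hconv.abs_integral_rpow_sub_mul_le (lam := lam) hpq hα.1 hθ.le (hmem hax hxb)
    ⟨hmaa, hab.le⟩ (hmem le_rfl hab.le) (hint.mono_set (uIcc_subset_uIcc_left hmx))
  have hT₂ := hconv.abs_integral_rpow_sub_mul_le (lam := lam) hpq hα.1 hθ.le (hmem hax hxb)
    ⟨hmaa.trans hab.le, le_rfl⟩ (hmem hab.le le_rfl)
    (hint.mono_set (uIcc_subset_uIcc right_mem_uIcc hmx))
  exact (abs_Sf_le lam hm0 hθ hab hax hxb hderiv hint hT₁ hT₂).trans_eq (by ring)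
end
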